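/- (Lemma A.7) Suppose λ_5 + λ_6 = 0 and let x = 0101. (i) If condition (A.23) fails, then V(x) = 0. (ii) If condition (A.23) holds, then V(x) = (−1)^{n(g,1)} · Q_1 · Q_2 (equality of complex numbers, the real number V(x) viewed as a complex number), where for k = 1, 2, Q_k = (1/(2^{(β_k+1)/2} · i^{μ_k})) · [exp((iπ/4)(1 + β_k^*)) + (−1)^{μ_k} · exp(−(iπ/4)(1 + β_k^*))], with β_1 = λ_1 + λ_3, β_2 = λ_2 + λ_4, β_1^* = f_{12} + f_{30} − f_{10} − f_{32} and β_2^* = f_{03} + f_{21} − f_{01} − f_{23}. -/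
import Mathlib


open Real Finset

noncomputable section

/-- The trigonometric argument π/4 + (π/2)·t. -/
def trigArg (t : ℝ) : ℝ := Real.pi / 4 + Real.pi / 2 * t

/-- The dot product a'w = Σ_j a_j w_j as a real number. -/
def dotR {n : ℕ} (a w : Fin n → Fin 4) : ℝ :=
  ∑ j, ((a j : ℕ) : ℝ) * ((w j : ℕ) : ℝ)

/-- ψ(a), depending on the pairwise disjoint subsets S₁, S₂, S₃. -/
def psi {n : ℕ} (S1 S2 S3 : Finset (Fin n)) (a : Fin n → Fin 4) : ℝ :=
  (∏ j ∈ S1, (Real.sin (trigArg ((a j : ℕ) : ℝ)) * Real.cos (trigArg ((a j : ℕ) : ℝ)))) *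
  (∏ j ∈ S2, Real.cos (trigArg ((a j : ℕ) : ℝ))) *
  (∏ j ∈ S3, Real.sin (trigArg ((a j : ℕ) : ℝ)))

/-- S₁, S₂, S₃ are pairwise disjoint. -/
def PairwiseDisj {n : ℕ} (S1 S2 S3 : Finset (Fin n)) : Prop :=
  Disjoint S1 S2 ∧ Disjoint S1 S3 ∧ Disjoint S2 S3

/-- a'g = Σ_j a_j g_j with g_j = u_j + v_j (ordinary integers), as a real number. -/
def dotG {n : ℕ} (u v a : Fin n → Fin 4) : ℝ :=
  ∑ j, ((a j : ℕ) : ℝ) * (((u j : ℕ) : ℝ) + ((v j : ℕ) : ℝ))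

/-- a'h = Σ_j a_j h_j with h_j = u_j − v_j (ordinary integers), as a real number. -/
def dotH {n : ℕ} (u v a : Fin n → Fin 4) : ℝ :=
  ∑ j, ((a j : ℕ) : ℝ) * (((u j : ℕ) : ℝ) - ((v j : ℕ) : ℝ))

/-- The coefficient 2^{(m+2)/2 − 2n}. -/
def coefPow (n m : ℕ) : ℝ := (2 : ℝ) ^ (((m + 2 : ℕ) : ℝ) / 2 - 2 * (n : ℝ))

def V1 {n : ℕ} (u v : Fin n → Fin 4) (S1 S2 S3 : Finset (Fin n)) : ℂ :=
  ∑ a : Fin n → Fin 4,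
    ((coefPow n (2 * S1.card + S2.card + S3.card) : ℝ) : ℂ) * (1 / 4) *
      Complex.exp (Complex.I * ((Real.pi : ℂ) / 2) * (((1 + dotG u v a : ℝ)) : ℂ)) *
      ((psi S1 S2 S3 a : ℝ) : ℂ)

def V2 {n : ℕ} (u v : Fin n → Fin 4) (S1 S2 S3 : Finset (Fin n)) : ℂ :=
  ∑ a : Fin n → Fin 4,
    ((coefPow n (2 * S1.card + S2.card + S3.card) : ℝ) : ℂ) * (1 / 4) *
      Complex.exp (Complex.I * ((Real.pi : ℂ) / 2) * ((dotH u v a : ℝ) : ℂ)) *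
      ((psi S1 S2 S3 a : ℝ) : ℂ)

def V3 {n : ℕ} (u v : Fin n → Fin 4) (S1 S2 S3 : Finset (Fin n)) : ℂ :=
  ∑ a : Fin n → Fin 4,
    ((coefPow n (2 * S1.card + S2.card + S3.card) : ℝ) : ℂ) * (1 / 4) *
      Complex.exp (-(Complex.I * ((Real.pi : ℂ) / 2) * ((dotH u v a : ℝ) : ℂ))) *
      ((psi S1 S2 S3 a : ℝ) : ℂ)

def V4 {n : ℕ} (u v : Fin n → Fin 4) (S1 S2 S3 : Finset (Fin n)) : ℂ :=
  ∑ a : Fin n → Fin 4,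
    ((coefPow n (2 * S1.card + S2.card + S3.card) : ℝ) : ℂ) * (1 / 4) *
      Complex.exp (-(Complex.I * ((Real.pi : ℂ) / 2) * (((1 + dotG u v a : ℝ)) : ℂ))) *
      ((psi S1 S2 S3 a : ℝ) : ℂ)

/-- Δ_k^g = {j : g_j ≡ k (mod 4)} where g_j = u_j + v_j. -/
def DeltaG {n : ℕ} (u v : Fin n → Fin 4) (k : ℕ) : Finset (Fin n) :=
  Finset.univ.filter (fun j => ((u j : ℕ) + (v j : ℕ)) % 4 = k)

/-- Δ_k^h = {j : h_j ≡ k (mod 4)} where h_j = u_j − v_j (an integer). -/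
def DeltaH {n : ℕ} (u v : Fin n → Fin 4) (k : ℤ) : Finset (Fin n) :=
  Finset.univ.filter (fun j => (((u j : ℕ) : ℤ) - ((v j : ℕ) : ℤ)) % 4 = k)

/-- Condition (A.15): S₁ = Δ₂^g, S₂ ∪ S₃ = Δ₁^g ∪ Δ₃^g, S₄ = Δ₀^g. -/
def CondA15 {n : ℕ} (u v : Fin n → Fin 4) (S1 S2 S3 : Finset (Fin n)) : Prop :=
  S1 = DeltaG u v 2 ∧ S2 ∪ S3 = DeltaG u v 1 ∪ DeltaG u v 3 ∧
    Finset.univ \ (S1 ∪ S2 ∪ S3) = DeltaG u v 0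

/-- Condition (A.16): S₁ = Δ₂^h, S₂ ∪ S₃ = Δ₁^h ∪ Δ₃^h, S₄ = Δ₀^h. -/
def CondA16 {n : ℕ} (u v : Fin n → Fin 4) (S1 S2 S3 : Finset (Fin n)) : Prop :=
  S1 = DeltaH u v 2 ∧ S2 ∪ S3 = DeltaH u v 1 ∪ DeltaH u v 3 ∧
    Finset.univ \ (S1 ∪ S2 ∪ S3) = DeltaH u v 0

/-- Δ_{ks} = {j : u_j = k, v_j = s}. -/
def DeltaKS {n : ℕ} (u v : Fin n → Fin 4) (k s : Fin 4) : Finset (Fin n) :=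
  Finset.univ.filter (fun j => u j = k ∧ v j = s)

/-- f_{ks} = #Δ_{ks}. -/
def freq {n : ℕ} (u v : Fin n → Fin 4) (k s : Fin 4) : ℕ := (DeltaKS u v k s).card

def lam1 {n : ℕ} (u v : Fin n → Fin 4) : ℕ := freq u v 1 0 + freq u v 3 0
def lam2 {n : ℕ} (u v : Fin n → Fin 4) : ℕ := freq u v 0 1 + freq u v 0 3
def lam3 {n : ℕ} (u v : Fin n → Fin 4) : ℕ := freq u v 1 2 + freq u v 3 2
def lam4 {n : ℕ} (u v : Fin n → Fin 4) : ℕ := freq u v 2 1 + freq u v 2 3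
def lam5 {n : ℕ} (u v : Fin n → Fin 4) : ℕ := freq u v 1 1 + freq u v 3 3
def lam6 {n : ℕ} (u v : Fin n → Fin 4) : ℕ := freq u v 1 3 + freq u v 3 1

/-- β = λ₁ + λ₂ + λ₃ + λ₄. -/
def betaval {n : ℕ} (u v : Fin n → Fin 4) : ℕ :=
  lam1 u v + lam2 u v + lam3 u v + lam4 u v

/-- Δ⁽¹⁾ = Δ₁₀ ∪ Δ₁₂ ∪ Δ₃₀ ∪ Δ₃₂. -/
def DeltaOne {n : ℕ} (u v : Fin n → Fin 4) : Finset (Fin n) :=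
  DeltaKS u v 1 0 ∪ DeltaKS u v 1 2 ∪ DeltaKS u v 3 0 ∪ DeltaKS u v 3 2

/-- Δ⁽²⁾ = Δ₀₁ ∪ Δ₀₃ ∪ Δ₂₁ ∪ Δ₂₃. -/
def DeltaTwo {n : ℕ} (u v : Fin n → Fin 4) : Finset (Fin n) :=
  DeltaKS u v 0 1 ∪ DeltaKS u v 0 3 ∪ DeltaKS u v 2 1 ∪ DeltaKS u v 2 3

/-- Condition (A.23): S₁ = Δ₀₂ ∪ Δ₂₀, S₂ ∪ S₃ = Δ, S₄ = Δ₀₀ ∪ Δ₂₂. -/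
def CondA23 {n : ℕ} (u v : Fin n → Fin 4) (S1 S2 S3 : Finset (Fin n)) : Prop :=
  S1 = DeltaKS u v 0 2 ∪ DeltaKS u v 2 0 ∧
    S2 ∪ S3 = DeltaOne u v ∪ DeltaTwo u v ∧
    Finset.univ \ (S1 ∪ S2 ∪ S3) = DeltaKS u v 0 0 ∪ DeltaKS u v 2 2

/-- V(x) for x = 0101. -/
def V0101 {n : ℕ} (u v : Fin n → Fin 4) (S1 S2 S3 : Finset (Fin n)) : ℝ :=
  ∑ a : Fin n → Fin 4,
    coefPow n (2 * S1.card + S2.card + S3.card) *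
      Real.cos (trigArg (dotR a u)) * Real.cos (trigArg (dotR a v)) *
      psi S1 S2 S3 a

/-- Q_k = (1/(2^{(β_k+1)/2} i^{μ_k})) [exp((iπ/4)(1+β_k*)) + (−1)^{μ_k} exp(−(iπ/4)(1+β_k*))]. -/
def Qfun (b : ℕ) (bstar : ℤ) (mu : ℕ) : ℂ :=
  (1 / ((((2 : ℝ) ^ (((b : ℝ) + 1) / 2) : ℝ) : ℂ) * Complex.I ^ mu)) *
    (Complex.exp (Complex.I * ((Real.pi : ℂ) / 4) * (((1 + bstar : ℤ)) : ℂ)) +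
      (-1 : ℂ) ^ mu *
        Complex.exp (-(Complex.I * ((Real.pi : ℂ) / 4) * (((1 + bstar : ℤ)) : ℂ))))

namespace LA7

def eta : ℂ := ((Real.sqrt 2 / 2 : ℝ) : ℂ) * (1 + Complex.I)

lemma sqrt2_sq : ((Real.sqrt 2 : ℝ):ℂ)^2 = 2 := by
  norm_cast
  rw [Real.sq_sqrt]; norm_num

lemma eta_sq : eta ^ (2:ℕ) = Complex.I := by
  unfold eta
  push_cast
  linear_combination sqrt2_sq*((1+2*Complex.I+Complex.I^2)/4) + Complex.I_sq*(1/2)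

lemma eta_ne : eta ≠ 0 := by
  intro h
  have h2 := eta_sq
  rw [h] at h2
  simp at h2
  exact Complex.I_ne_zero h2.symm

lemma eta_pow4 : eta ^ (4:ℕ) = -1 := by
  have : eta ^ (4:ℕ) = (eta^(2:ℕ))^2 := by ring
  rw [this, eta_sq, Complex.I_sq]

lemma eta_pow8 : eta ^ (8:ℕ) = 1 := by
  have : eta ^ (8:ℕ) = (eta^(4:ℕ))^2 := by ring
  rw [this, eta_pow4]; ring

lemma eta_period (x k : ℤ) : eta ^ (x + 8*k) = eta ^ x := by
  rw [zpow_add₀ eta_ne, zpow_mul, show eta ^ (8:ℤ) = 1 by exact_mod_cast eta_pow8, one_zpow, mul_one]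

lemma eta_congr {x y : ℤ} (h : x % 8 = y % 8) : eta ^ x = eta ^ y := by
  have hx : x = y + 8 * ((x - y)/8) := by omega
  rw [hx, eta_period]

lemma I_eq_eta : Complex.I = eta ^ (2:ℤ) := by
  rw [show (2:ℤ) = ((2:ℕ):ℤ) from rfl, zpow_natCast, eta_sq]

lemma eta_inv : eta ^ (-1:ℤ) = ((Real.sqrt 2 / 2 : ℝ) : ℂ) * (1 - Complex.I) := by
  rw [zpow_neg, zpow_one]
  refine inv_eq_of_mul_eq_one_right ?_
  unfold eta
  push_cast
  linear_combination sqrt2_sq*((1 - Complex.I^2)/4) + Complex.I_sq*(-1/2)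

lemma exp_quarter (k : ℤ) : Complex.exp (Complex.I * ((Real.pi:ℂ)/4) * (k:ℂ)) = eta ^ k := by
  have h1 : Complex.exp (Complex.I * ((Real.pi:ℂ)/4)) = eta := by
    rw [mul_comm, Complex.exp_mul_I]
    unfold eta
    rw [show ((Real.pi:ℂ)/4) = ((Real.pi/4 : ℝ):ℂ) by push_cast; ring]
    rw [← Complex.ofReal_cos, ← Complex.ofReal_sin, Real.cos_pi_div_four, Real.sin_pi_div_four]
    push_cast; ring
  rw [← h1, ← Complex.exp_int_mul]
  congr 1; ring

lemma exp_half (k : ℤ) : Complex.exp (Complex.I * ((Real.pi:ℂ)/2) * (k:ℂ)) = Complex.I ^ k := by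
  have h : Complex.I * ((Real.pi:ℂ)/2) * (k:ℂ) = Complex.I * ((Real.pi:ℂ)/4) * ((2*k : ℤ):ℂ) := by
    push_cast; ring
  rw [h, exp_quarter, I_eq_eta, ← zpow_mul]

lemma I_zpow_mod (k : ℤ) : Complex.I ^ k = Complex.I ^ (k % 4) := by
  have h : k = k % 4 + 4 * (k / 4) := by omega
  nth_rewrite 1 [h]
  rw [zpow_add₀ Complex.I_ne_zero, zpow_mul,
    show Complex.I ^ (4:ℤ) = 1 by rw [show (4:ℤ) = ((4:ℕ):ℤ) from rfl, zpow_natCast, Complex.I_pow_four],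
    one_zpow, mul_one]

lemma Iz0 : Complex.I ^ (0:ℤ) = 1 := zpow_zero _
lemma Iz1 : Complex.I ^ (1:ℤ) = Complex.I := zpow_one _
lemma Iz2 : Complex.I ^ (2:ℤ) = -1 := by
  rw [show (2:ℤ) = ((2:ℕ):ℤ) from rfl, zpow_natCast, Complex.I_sq]
lemma Iz3 : Complex.I ^ (3:ℤ) = -Complex.I := by
  rw [show (3:ℤ) = ((3:ℕ):ℤ) from rfl, zpow_natCast, pow_succ, Complex.I_sq]; ring

lemma trig0c : Real.cos (trigArg 0) = Real.sqrt 2 / 2 := by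
  simp [trigArg, Real.cos_pi_div_four]
lemma trig0s : Real.sin (trigArg 0) = Real.sqrt 2 / 2 := by
  simp [trigArg, Real.sin_pi_div_four]
lemma trig1c : Real.cos (trigArg 1) = -(Real.sqrt 2 / 2) := by
  rw [show trigArg 1 = Real.pi - Real.pi/4 by unfold trigArg; ring, Real.cos_pi_sub, Real.cos_pi_div_four]
lemma trig1s : Real.sin (trigArg 1) = Real.sqrt 2 / 2 := by
  rw [show trigArg 1 = Real.pi - Real.pi/4 by unfold trigArg; ring, Real.sin_pi_sub, Real.sin_pi_div_four]
lemma trig2c : Real.cos (trigArg 2) = -(Real.sqrt 2 / 2) := by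
  rw [show trigArg 2 = Real.pi/4 + Real.pi by unfold trigArg; ring, Real.cos_add_pi, Real.cos_pi_div_four]
lemma trig2s : Real.sin (trigArg 2) = -(Real.sqrt 2 / 2) := by
  rw [show trigArg 2 = Real.pi/4 + Real.pi by unfold trigArg; ring, Real.sin_add_pi, Real.sin_pi_div_four]
lemma trig3c : Real.cos (trigArg 3) = Real.sqrt 2 / 2 := by
  rw [show trigArg 3 = 2*Real.pi - Real.pi/4 by unfold trigArg; ring, Real.cos_two_pi_sub, Real.cos_pi_div_four]
lemma trig3s : Real.sin (trigArg 3) = -(Real.sqrt 2 / 2) := by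
  rw [show trigArg 3 = 2*Real.pi - Real.pi/4 by unfold trigArg; ring, Real.sin_two_pi_sub, Real.sin_pi_div_four]

variable {n : ℕ}

def chi (S1 S2 S3 : Finset (Fin n)) (j : Fin n) (t : Fin 4) : ℝ :=
  if j ∈ S1 then Real.sin (trigArg ((t:ℕ):ℝ)) * Real.cos (trigArg ((t:ℕ):ℝ))
  else if j ∈ S2 then Real.cos (trigArg ((t:ℕ):ℝ))
  else if j ∈ S3 then Real.sin (trigArg ((t:ℕ):ℝ))
  else 1

lemma psi_eq_prod (S1 S2 S3 : Finset (Fin n)) (hd : PairwiseDisj S1 S2 S3) (a : Fin n → Fin 4) :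
    psi S1 S2 S3 a = ∏ j, chi S1 S2 S3 j (a j) := by
  obtain ⟨h12, h13, h23⟩ := hd
  have e1 : ∀ (S : Finset (Fin n)) (f : Fin n → ℝ), ∏ j ∈ S, f j = ∏ j, if j ∈ S then f j else 1 := by
    intro S f
    rw [Finset.prod_ite_mem]
    simp [Finset.univ_inter]
  unfold psi
  rw [e1 S1, e1 S2, e1 S3, ← Finset.prod_mul_distrib, ← Finset.prod_mul_distrib]
  refine Finset.prod_congr rfl fun j _ => ?_
  unfold chi
  by_cases h1 : j ∈ S1
  · have h2 : j ∉ S2 := Finset.disjoint_left.1 h12 h1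
    have h3 : j ∉ S3 := Finset.disjoint_left.1 h13 h1
    simp [h1, h2, h3]
  · by_cases h2 : j ∈ S2
    · have h3 : j ∉ S3 := Finset.disjoint_left.1 h23 h2
      simp [h1, h2, h3]
    · by_cases h3 : j ∈ S3 <;> simp [h1, h2, h3]

def cw (S1 S2 S3 : Finset (Fin n)) (w : Fin n → ℤ) (j : Fin n) : ℂ :=
  ∑ t : Fin 4, (Complex.I ^ (w j)) ^ (t:ℕ) * ((chi S1 S2 S3 j t : ℝ) : ℂ)

lemma I_zpow_sum {ι : Type*} (s : Finset ι) (f : ι → ℤ) :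
    Complex.I ^ (∑ i ∈ s, f i) = ∏ i ∈ s, Complex.I ^ f i := by
  induction s using Finset.cons_induction with
  | empty => simp
  | cons a s ha ih => rw [Finset.sum_cons, Finset.prod_cons, zpow_add₀ Complex.I_ne_zero, ih]

lemma core (S1 S2 S3 : Finset (Fin n)) (hd : PairwiseDisj S1 S2 S3) (w : Fin n → ℤ) :
    ∑ a : Fin n → Fin 4, (Complex.I ^ (∑ j, (a j : ℤ) * w j)) * ((psi S1 S2 S3 a : ℝ) : ℂ)
      = ∏ j, cw S1 S2 S3 w j := by
  have step : ∀ a : Fin n → Fin 4,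
      (Complex.I ^ (∑ j, (a j : ℤ) * w j)) * ((psi S1 S2 S3 a : ℝ) : ℂ)
        = ∏ j, (Complex.I ^ (w j)) ^ ((a j : ℕ)) * ((chi S1 S2 S3 j (a j) : ℝ) : ℂ) := by
    intro a
    rw [psi_eq_prod S1 S2 S3 hd, I_zpow_sum _ _, Finset.prod_mul_distrib]
    push_cast
    congr 1
    refine Finset.prod_congr rfl fun j _ => ?_
    rw [mul_comm ((a j : ℤ)) (w j), zpow_mul, ← zpow_natCast (Complex.I ^ w j) ((a j : ℕ))]
  simp_rw [step]
  simp only [cw]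
  conv_rhs => rw [Finset.prod_univ_sum]
  rw [Fintype.piFinset_univ]

end LA7
namespace LA7
variable {n : ℕ} {S1 S2 S3 : Finset (Fin n)} {w : Fin n → ℤ} {j : Fin n}

lemma Ip3 : Complex.I^(3:ℕ) = -Complex.I := by rw [pow_succ, Complex.I_sq]; ring

lemma cw_expand (w : Fin n → ℤ) (j : Fin n) : cw S1 S2 S3 w j =
    ((chi S1 S2 S3 j 0 : ℝ) : ℂ) + (Complex.I ^ (w j)) * ((chi S1 S2 S3 j 1 : ℝ):ℂ)
      + (Complex.I ^ (w j))^2 * ((chi S1 S2 S3 j 2 : ℝ):ℂ)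
      + (Complex.I ^ (w j))^3 * ((chi S1 S2 S3 j 3 : ℝ):ℂ) := by
  unfold cw
  rw [Fin.sum_univ_four, show ((0:Fin 4):ℕ) = 0 from rfl, show ((1:Fin 4):ℕ) = 1 from rfl,
    show ((2:Fin 4):ℕ) = 2 from rfl, show ((3:Fin 4):ℕ) = 3 from rfl]
  norm_num

lemma chi_vals_S1 (h1 : j ∈ S1) : ∀ t : Fin 4, True := fun _ => trivial

section
set_option maxHeartbeats 800000

-- master tactic chunk per case written inline below
lemma cw_S1_0 (h1 : j ∈ S1) (h : w j % 4 = 0) : cw S1 S2 S3 w j = 0 := by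
  rw [cw_expand, I_zpow_mod, h, Iz0]
  simp only [chi, h1, if_true]
  rw [show ((0:Fin 4):ℕ) = 0 from rfl, show ((1:Fin 4):ℕ) = 1 from rfl,
    show ((2:Fin 4):ℕ) = 2 from rfl, show ((3:Fin 4):ℕ) = 3 from rfl,
    Nat.cast_zero, Nat.cast_one, show ((2:ℕ):ℝ) = 2 by norm_num, show ((3:ℕ):ℝ) = 3 by norm_num]
  rw [trig0c, trig0s, trig1c, trig1s, trig2c, trig2s, trig3c, trig3s]
  push_cast
  ring

lemma cw_S1_1 (h1 : j ∈ S1) (h : w j % 4 = 1) : cw S1 S2 S3 w j = 0 := by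
  rw [cw_expand, I_zpow_mod, h, Iz1]
  simp only [chi, h1, if_true]
  rw [show ((0:Fin 4):ℕ) = 0 from rfl, show ((1:Fin 4):ℕ) = 1 from rfl,
    show ((2:Fin 4):ℕ) = 2 from rfl, show ((3:Fin 4):ℕ) = 3 from rfl,
    Nat.cast_zero, Nat.cast_one, show ((2:ℕ):ℝ) = 2 by norm_num, show ((3:ℕ):ℝ) = 3 by norm_num]
  rw [trig0c, trig0s, trig1c, trig1s, trig2c, trig2s, trig3c, trig3s, Complex.I_sq, Ip3]
  push_cast
  ring

lemma cw_S1_2 (h1 : j ∈ S1) (h : w j % 4 = 2) : cw S1 S2 S3 w j = 2 := by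
  rw [cw_expand, I_zpow_mod, h, Iz2]
  simp only [chi, h1, if_true]
  rw [show ((0:Fin 4):ℕ) = 0 from rfl, show ((1:Fin 4):ℕ) = 1 from rfl,
    show ((2:Fin 4):ℕ) = 2 from rfl, show ((3:Fin 4):ℕ) = 3 from rfl,
    Nat.cast_zero, Nat.cast_one, show ((2:ℕ):ℝ) = 2 by norm_num, show ((3:ℕ):ℝ) = 3 by norm_num]
  rw [trig0c, trig0s, trig1c, trig1s, trig2c, trig2s, trig3c, trig3s]
  push_cast
  linear_combination sqrt2_sq

lemma cw_S1_3 (h1 : j ∈ S1) (h : w j % 4 = 3) : cw S1 S2 S3 w j = 0 := by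
  rw [cw_expand, I_zpow_mod, h, Iz3]
  simp only [chi, h1, if_true]
  rw [show ((0:Fin 4):ℕ) = 0 from rfl, show ((1:Fin 4):ℕ) = 1 from rfl,
    show ((2:Fin 4):ℕ) = 2 from rfl, show ((3:Fin 4):ℕ) = 3 from rfl,
    Nat.cast_zero, Nat.cast_one, show ((2:ℕ):ℝ) = 2 by norm_num, show ((3:ℕ):ℝ) = 3 by norm_num]
  rw [trig0c, trig0s, trig1c, trig1s, trig2c, trig2s, trig3c, trig3s]
  push_cast
  ring_nf
  rw [Complex.I_sq, Ip3]
  ring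
end

section
set_option maxHeartbeats 1600000
variable {n : ℕ} {S1 S2 S3 : Finset (Fin n)} {w : Fin n → ℤ} {j : Fin n}

lemma cw_S2_0 (h1 : j ∉ S1) (h2 : j ∈ S2) (h : w j % 4 = 0) : cw S1 S2 S3 w j = 0 := by
  rw [cw_expand, I_zpow_mod, h, Iz0]
  simp only [chi, h1, h2, if_true, if_false]
  rw [show ((0:Fin 4):ℕ) = 0 from rfl, show ((1:Fin 4):ℕ) = 1 from rfl,
    show ((2:Fin 4):ℕ) = 2 from rfl, show ((3:Fin 4):ℕ) = 3 from rfl,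
    Nat.cast_zero, Nat.cast_one, show ((2:ℕ):ℝ) = 2 by norm_num, show ((3:ℕ):ℝ) = 3 by norm_num]
  rw [trig0c, trig1c, trig2c, trig3c]
  push_cast
  ring

lemma cw_S2_2 (h1 : j ∉ S1) (h2 : j ∈ S2) (h : w j % 4 = 2) : cw S1 S2 S3 w j = 0 := by
  rw [cw_expand, I_zpow_mod, h, Iz2]
  simp only [chi, h1, h2, if_true, if_false]
  rw [show ((0:Fin 4):ℕ) = 0 from rfl, show ((1:Fin 4):ℕ) = 1 from rfl,
    show ((2:Fin 4):ℕ) = 2 from rfl, show ((3:Fin 4):ℕ) = 3 from rfl,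
    Nat.cast_zero, Nat.cast_one, show ((2:ℕ):ℝ) = 2 by norm_num, show ((3:ℕ):ℝ) = 3 by norm_num]
  rw [trig0c, trig1c, trig2c, trig3c]
  push_cast
  ring

lemma cw_S2_1 (h1 : j ∉ S1) (h2 : j ∈ S2) (h : w j % 4 = 1) :
    cw S1 S2 S3 w j = 2 * eta ^ (-1:ℤ) := by
  rw [cw_expand, I_zpow_mod, h, Iz1, eta_inv]
  simp only [chi, h1, h2, if_true, if_false]
  rw [show ((0:Fin 4):ℕ) = 0 from rfl, show ((1:Fin 4):ℕ) = 1 from rfl,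
    show ((2:Fin 4):ℕ) = 2 from rfl, show ((3:Fin 4):ℕ) = 3 from rfl,
    Nat.cast_zero, Nat.cast_one, show ((2:ℕ):ℝ) = 2 by norm_num, show ((3:ℕ):ℝ) = 3 by norm_num]
  rw [trig0c, trig1c, trig2c, trig3c]
  push_cast
  ring_nf
  simp only [Complex.I_sq, Ip3]
  ring

lemma cw_S2_3 (h1 : j ∉ S1) (h2 : j ∈ S2) (h : w j % 4 = 3) :
    cw S1 S2 S3 w j = 2 * eta ^ (1:ℤ) := by
  rw [cw_expand, I_zpow_mod, h, Iz3, zpow_one]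
  unfold eta
  simp only [chi, h1, h2, if_true, if_false]
  rw [show ((0:Fin 4):ℕ) = 0 from rfl, show ((1:Fin 4):ℕ) = 1 from rfl,
    show ((2:Fin 4):ℕ) = 2 from rfl, show ((3:Fin 4):ℕ) = 3 from rfl,
    Nat.cast_zero, Nat.cast_one, show ((2:ℕ):ℝ) = 2 by norm_num, show ((3:ℕ):ℝ) = 3 by norm_num]
  rw [trig0c, trig1c, trig2c, trig3c]
  push_cast
  ring_nf
  simp only [Complex.I_sq, Ip3]
  ring

lemma cw_S3_0 (h1 : j ∉ S1) (h2 : j ∉ S2) (h3 : j ∈ S3) (h : w j % 4 = 0) : cw S1 S2 S3 w j = 0 := by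
  rw [cw_expand, I_zpow_mod, h, Iz0]
  simp only [chi, h1, h2, h3, if_true, if_false]
  rw [show ((0:Fin 4):ℕ) = 0 from rfl, show ((1:Fin 4):ℕ) = 1 from rfl,
    show ((2:Fin 4):ℕ) = 2 from rfl, show ((3:Fin 4):ℕ) = 3 from rfl,
    Nat.cast_zero, Nat.cast_one, show ((2:ℕ):ℝ) = 2 by norm_num, show ((3:ℕ):ℝ) = 3 by norm_num]
  rw [trig0s, trig1s, trig2s, trig3s]
  push_cast
  ring

lemma cw_S3_2 (h1 : j ∉ S1) (h2 : j ∉ S2) (h3 : j ∈ S3) (h : w j % 4 = 2) : cw S1 S2 S3 w j = 0 := by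
  rw [cw_expand, I_zpow_mod, h, Iz2]
  simp only [chi, h1, h2, h3, if_true, if_false]
  rw [show ((0:Fin 4):ℕ) = 0 from rfl, show ((1:Fin 4):ℕ) = 1 from rfl,
    show ((2:Fin 4):ℕ) = 2 from rfl, show ((3:Fin 4):ℕ) = 3 from rfl,
    Nat.cast_zero, Nat.cast_one, show ((2:ℕ):ℝ) = 2 by norm_num, show ((3:ℕ):ℝ) = 3 by norm_num]
  rw [trig0s, trig1s, trig2s, trig3s]
  push_cast
  ring

lemma cw_S3_1 (h1 : j ∉ S1) (h2 : j ∉ S2) (h3 : j ∈ S3) (h : w j % 4 = 1) :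
    cw S1 S2 S3 w j = 2 * eta ^ (1:ℤ) := by
  rw [cw_expand, I_zpow_mod, h, Iz1, zpow_one]
  unfold eta
  simp only [chi, h1, h2, h3, if_true, if_false]
  rw [show ((0:Fin 4):ℕ) = 0 from rfl, show ((1:Fin 4):ℕ) = 1 from rfl,
    show ((2:Fin 4):ℕ) = 2 from rfl, show ((3:Fin 4):ℕ) = 3 from rfl,
    Nat.cast_zero, Nat.cast_one, show ((2:ℕ):ℝ) = 2 by norm_num, show ((3:ℕ):ℝ) = 3 by norm_num]
  rw [trig0s, trig1s, trig2s, trig3s]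
  push_cast
  ring_nf
  simp only [Complex.I_sq, Ip3]
  ring

lemma cw_S3_3 (h1 : j ∉ S1) (h2 : j ∉ S2) (h3 : j ∈ S3) (h : w j % 4 = 3) :
    cw S1 S2 S3 w j = 2 * eta ^ (-1:ℤ) := by
  rw [cw_expand, I_zpow_mod, h, Iz3, eta_inv]
  simp only [chi, h1, h2, h3, if_true, if_false]
  rw [show ((0:Fin 4):ℕ) = 0 from rfl, show ((1:Fin 4):ℕ) = 1 from rfl,
    show ((2:Fin 4):ℕ) = 2 from rfl, show ((3:Fin 4):ℕ) = 3 from rfl,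
    Nat.cast_zero, Nat.cast_one, show ((2:ℕ):ℝ) = 2 by norm_num, show ((3:ℕ):ℝ) = 3 by norm_num]
  rw [trig0s, trig1s, trig2s, trig3s]
  push_cast
  ring_nf
  simp only [Complex.I_sq, Ip3]
  ring

lemma cw_S4_0 (h1 : j ∉ S1) (h2 : j ∉ S2) (h3 : j ∉ S3) (h : w j % 4 = 0) : cw S1 S2 S3 w j = 4 := by
  rw [cw_expand, I_zpow_mod, h, Iz0]
  simp only [chi, h1, h2, h3, if_false]
  push_cast
  ring

lemma cw_S4_1 (h1 : j ∉ S1) (h2 : j ∉ S2) (h3 : j ∉ S3) (h : w j % 4 = 1) : cw S1 S2 S3 w j = 0 := by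
  rw [cw_expand, I_zpow_mod, h, Iz1]
  simp only [chi, h1, h2, h3, if_false]
  push_cast
  ring_nf
  simp only [Complex.I_sq, Ip3]
  ring

lemma cw_S4_2 (h1 : j ∉ S1) (h2 : j ∉ S2) (h3 : j ∉ S3) (h : w j % 4 = 2) : cw S1 S2 S3 w j = 0 := by
  rw [cw_expand, I_zpow_mod, h, Iz2]
  simp only [chi, h1, h2, h3, if_false]
  push_cast
  ring

lemma cw_S4_3 (h1 : j ∉ S1) (h2 : j ∉ S2) (h3 : j ∉ S3) (h : w j % 4 = 3) : cw S1 S2 S3 w j = 0 := by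
  rw [cw_expand, I_zpow_mod, h, Iz3]
  simp only [chi, h1, h2, h3, if_false]
  push_cast
  ring_nf
  simp only [Complex.I_sq, Ip3]
  ring
end

end LA7
namespace LA7
variable {n : ℕ} {S1 S2 S3 : Finset (Fin n)} {w : Fin n → ℤ}

def GoodW (S1 S2 S3 : Finset (Fin n)) (w : Fin n → ℤ) : Prop :=
  ∀ j, (j ∈ S1 → w j % 4 = 2) ∧ ((j ∈ S2 ∨ j ∈ S3) → w j % 4 = 1 ∨ w j % 4 = 3) ∧
    ((j ∉ S1 ∧ j ∉ S2 ∧ j ∉ S3) → w j % 4 = 0)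

lemma prod_cw_zero (hd : PairwiseDisj S1 S2 S3) (hbad : ¬ GoodW S1 S2 S3 w) :
    ∏ j, cw S1 S2 S3 w j = 0 := by
  obtain ⟨h12, h13, h23⟩ := hd
  unfold GoodW at hbad
  rw [not_forall] at hbad
  obtain ⟨j, hj⟩ := hbad
  apply Finset.prod_eq_zero (Finset.mem_univ j)
  have hr : w j % 4 = 0 ∨ w j % 4 = 1 ∨ w j % 4 = 2 ∨ w j % 4 = 3 := by omega
  by_cases m1 : j ∈ S1
  · have m2 : j ∉ S2 := Finset.disjoint_left.1 h12 m1
    have m3 : j ∉ S3 := Finset.disjoint_left.1 h13 m1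
    have hne : w j % 4 ≠ 2 := by
      intro h
      exact hj ⟨fun _ => h, fun hc => absurd hc (by simp [m2, m3]), fun hc => absurd m1 hc.1⟩
    rcases hr with h|h|h|h
    · exact cw_S1_0 m1 h
    · exact cw_S1_1 m1 h
    · exact absurd h hne
    · exact cw_S1_3 m1 h
  · by_cases m2 : j ∈ S2
    · have m3 : j ∉ S3 := Finset.disjoint_left.1 h23 m2
      have hne : ¬ (w j % 4 = 1 ∨ w j % 4 = 3) := by
        intro h
        exact hj ⟨fun hc => absurd hc m1, fun _ => h, fun hc => absurd m2 hc.2.1⟩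
      rcases hr with h|h|h|h
      · exact cw_S2_0 m1 m2 h
      · exact absurd (Or.inl h) hne
      · exact cw_S2_2 m1 m2 h
      · exact absurd (Or.inr h) hne
    · by_cases m3 : j ∈ S3
      · have hne : ¬ (w j % 4 = 1 ∨ w j % 4 = 3) := by
          intro h
          exact hj ⟨fun hc => absurd hc m1, fun _ => h, fun hc => absurd m3 hc.2.2⟩
        rcases hr with h|h|h|h
        · exact cw_S3_0 m1 m2 m3 h
        · exact absurd (Or.inl h) hne
        · exact cw_S3_2 m1 m2 m3 h
        · exact absurd (Or.inr h) hne
      · have hne : w j % 4 ≠ 0 := by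
          intro h
          exact hj ⟨fun hc => absurd hc m1, fun hc => by tauto, fun _ => h⟩
        rcases hr with h|h|h|h
        · exact absurd h hne
        · exact cw_S4_1 m1 m2 m3 h
        · exact cw_S4_2 m1 m2 m3 h
        · exact cw_S4_3 m1 m2 m3 h

/-- the eta-exponent of the product -/
def qexp (S2 S3 : Finset (Fin n)) (w : Fin n → ℤ) : ℤ :=
  ((S2.filter (fun j => w j % 4 = 3)).card : ℤ) + ((S3.filter (fun j => w j % 4 = 1)).card : ℤ)
    - ((S2.filter (fun j => w j % 4 = 1)).card : ℤ) - ((S3.filter (fun j => w j % 4 = 3)).card : ℤ)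

lemma prod_pairs (hd : PairwiseDisj S1 S2 S3) (f : Fin n → ℂ) :
    ∏ j, f j = (∏ j ∈ Finset.univ \ (S1 ∪ S2 ∪ S3), f j) * ((∏ j ∈ S1, f j) * (∏ j ∈ S2, f j) * (∏ j ∈ S3, f j)) := by
  obtain ⟨h12, h13, h23⟩ := hd
  rw [← Finset.prod_sdiff (Finset.subset_univ (S1 ∪ S2 ∪ S3))]
  congr 1
  rw [Finset.prod_union (by rw [Finset.disjoint_union_left]; exact ⟨h13, h23⟩),
    Finset.prod_union h12]

lemma prod_cw_good (hd : PairwiseDisj S1 S2 S3) (hw : GoodW S1 S2 S3 w) :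
    ∏ j, cw S1 S2 S3 w j =
      (2:ℂ) ^ (S1.card + S2.card + S3.card + 2 * (Finset.univ \ (S1 ∪ S2 ∪ S3)).card) *
        eta ^ (qexp S2 S3 w) := by
  obtain ⟨h12, h13, h23⟩ := hd
  rw [prod_pairs ⟨h12, h13, h23⟩]
  -- S4 part
  have e4 : ∏ j ∈ Finset.univ \ (S1 ∪ S2 ∪ S3), cw S1 S2 S3 w j
      = (4:ℂ) ^ (Finset.univ \ (S1 ∪ S2 ∪ S3)).card := by
    rw [← Finset.prod_const]
    refine Finset.prod_congr rfl fun j hj => ?_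
    simp only [Finset.mem_sdiff, Finset.mem_union, Finset.mem_univ, true_and] at hj
    push_neg at hj
    exact cw_S4_0 hj.1.1 hj.1.2 hj.2 ((hw j).2.2 ⟨hj.1.1, hj.1.2, hj.2⟩)
  have e1 : ∏ j ∈ S1, cw S1 S2 S3 w j = (2:ℂ) ^ S1.card := by
    rw [← Finset.prod_const]
    exact Finset.prod_congr rfl fun j hj => cw_S1_2 hj ((hw j).1 hj)
  have e2 : ∏ j ∈ S2, cw S1 S2 S3 w j
      = (2:ℂ) ^ S2.card * eta ^ (((S2.filter (fun j => w j % 4 = 3)).card : ℤ) - ((S2.filter (fun j => w j % 4 = 1)).card : ℤ)) := by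
    rw [← Finset.prod_filter_mul_prod_filter_not S2 (fun j => w j % 4 = 1)]
    have hA : ∏ j ∈ S2.filter (fun j => w j % 4 = 1), cw S1 S2 S3 w j
        = (2 * eta ^ (-1:ℤ)) ^ (S2.filter (fun j => w j % 4 = 1)).card := by
      rw [← Finset.prod_const]
      refine Finset.prod_congr rfl fun j hj => ?_
      rw [Finset.mem_filter] at hj
      exact cw_S2_1 (Finset.disjoint_right.1 h12 hj.1) hj.1 hj.2
    have hfe : S2.filter (fun j => ¬ w j % 4 = 1) = S2.filter (fun j => w j % 4 = 3) := by
      refine Finset.filter_congr fun j hj => ?_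
      have := (hw j).2.1 (Or.inl hj)
      constructor <;> (intro h; omega)
    have hB : ∏ j ∈ S2.filter (fun j => ¬ w j % 4 = 1), cw S1 S2 S3 w j
        = (2 * eta ^ (1:ℤ)) ^ (S2.filter (fun j => w j % 4 = 3)).card := by
      rw [hfe, ← Finset.prod_const]
      refine Finset.prod_congr rfl fun j hj => ?_
      rw [Finset.mem_filter] at hj
      exact cw_S2_3 (Finset.disjoint_right.1 h12 hj.1) hj.1 hj.2
    rw [hA, hB, mul_pow, mul_pow, ← zpow_natCast (eta ^ (-1:ℤ)), ← zpow_natCast (eta ^ (1:ℤ)),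
      ← zpow_mul, ← zpow_mul]
    have hcard : (S2.filter (fun j => w j % 4 = 1)).card + (S2.filter (fun j => w j % 4 = 3)).card = S2.card := by
      rw [← hfe]
      exact Finset.card_filter_add_card_filter_not _
    rw [← hcard, pow_add, one_mul, neg_one_mul, sub_eq_neg_add, zpow_add₀ eta_ne]
    ring
  have e3 : ∏ j ∈ S3, cw S1 S2 S3 w j
      = (2:ℂ) ^ S3.card * eta ^ (((S3.filter (fun j => w j % 4 = 1)).card : ℤ) - ((S3.filter (fun j => w j % 4 = 3)).card : ℤ)) := by
    rw [← Finset.prod_filter_mul_prod_filter_not S3 (fun j => w j % 4 = 1)]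
    have hA : ∏ j ∈ S3.filter (fun j => w j % 4 = 1), cw S1 S2 S3 w j
        = (2 * eta ^ (1:ℤ)) ^ (S3.filter (fun j => w j % 4 = 1)).card := by
      rw [← Finset.prod_const]
      refine Finset.prod_congr rfl fun j hj => ?_
      rw [Finset.mem_filter] at hj
      exact cw_S3_1 (Finset.disjoint_right.1 h13 hj.1) (Finset.disjoint_right.1 h23 hj.1) hj.1 hj.2
    have hfe : S3.filter (fun j => ¬ w j % 4 = 1) = S3.filter (fun j => w j % 4 = 3) := by
      refine Finset.filter_congr fun j hj => ?_
      have := (hw j).2.1 (Or.inr hj)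
      constructor <;> (intro h; omega)
    have hB : ∏ j ∈ S3.filter (fun j => ¬ w j % 4 = 1), cw S1 S2 S3 w j
        = (2 * eta ^ (-1:ℤ)) ^ (S3.filter (fun j => w j % 4 = 3)).card := by
      rw [hfe, ← Finset.prod_const]
      refine Finset.prod_congr rfl fun j hj => ?_
      rw [Finset.mem_filter] at hj
      exact cw_S3_3 (Finset.disjoint_right.1 h13 hj.1) (Finset.disjoint_right.1 h23 hj.1) hj.1 hj.2
    rw [hA, hB, mul_pow, mul_pow, ← zpow_natCast (eta ^ (-1:ℤ)), ← zpow_natCast (eta ^ (1:ℤ)),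
      ← zpow_mul, ← zpow_mul]
    have hcard : (S3.filter (fun j => w j % 4 = 1)).card + (S3.filter (fun j => w j % 4 = 3)).card = S3.card := by
      rw [← hfe]
      exact Finset.card_filter_add_card_filter_not _
    rw [← hcard, pow_add, one_mul, neg_one_mul, sub_eq_neg_add, zpow_add₀ eta_ne]
    ring
  rw [e4, e1, e2, e3]
  rw [show (4:ℂ) ^ (Finset.univ \ (S1 ∪ S2 ∪ S3)).card = 2 ^ (2 * (Finset.univ \ (S1 ∪ S2 ∪ S3)).card) by
    rw [pow_mul]; norm_num]
  calc (2:ℂ) ^ (2 * (Finset.univ \ (S1 ∪ S2 ∪ S3)).card) *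
        (2 ^ S1.card *
          (2 ^ S2.card * eta ^ (((S2.filter (fun j => w j % 4 = 3)).card : ℤ) - ((S2.filter (fun j => w j % 4 = 1)).card : ℤ))) *
          (2 ^ S3.card * eta ^ (((S3.filter (fun j => w j % 4 = 1)).card : ℤ) - ((S3.filter (fun j => w j % 4 = 3)).card : ℤ))))
      = 2 ^ (2 * (Finset.univ \ (S1 ∪ S2 ∪ S3)).card + (S1.card + (S2.card + S3.card))) *
        (eta ^ ((((S2.filter (fun j => w j % 4 = 3)).card : ℤ) - ((S2.filter (fun j => w j % 4 = 1)).card : ℤ))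
          + (((S3.filter (fun j => w j % 4 = 1)).card : ℤ) - ((S3.filter (fun j => w j % 4 = 3)).card : ℤ)))) := by
        rw [pow_add, pow_add, pow_add, zpow_add₀ eta_ne]; ring
    _ = _ := by
        congr 1
        · congr 1; ring
        · congr 1; unfold qexp; ring

end LA7
namespace LA7
variable {n : ℕ} {S1 S2 S3 : Finset (Fin n)}

def gI (u v : Fin n → Fin 4) (j : Fin n) : ℤ := ((u j : ℕ) : ℤ) + ((v j : ℕ) : ℤ)
def hI (u v : Fin n → Fin 4) (j : Fin n) : ℤ := ((u j : ℕ) : ℤ) - ((v j : ℕ) : ℤ)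

lemma key_cos (N : ℤ) :
    ((Real.cos (Real.pi/2 * (N:ℝ)) : ℝ) : ℂ) = (Complex.I ^ N + Complex.I ^ (-N))/2 := by
  rw [Complex.ofReal_cos]
  simp only [Complex.cos]
  rw [show ((Real.pi/2 * (N:ℝ) : ℝ):ℂ) * Complex.I = Complex.I * ((Real.pi:ℂ)/2) * ((N:ℤ):ℂ) by
    push_cast; ring]
  rw [show -(((Real.pi/2 * (N:ℝ) : ℝ):ℂ)) * Complex.I = Complex.I * ((Real.pi:ℂ)/2) * (((-N:ℤ)):ℂ) by
    push_cast; ring]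
  rw [exp_half, exp_half]

lemma coscos (u v : Fin n → Fin 4) (a : Fin n → Fin 4) :
    ((Real.cos (trigArg (dotR a u)) * Real.cos (trigArg (dotR a v)) : ℝ) : ℂ)
      = (1/4) * (Complex.I ^ (1 + ∑ j, ((a j : ℕ) : ℤ) * gI u v j)
          + Complex.I ^ (∑ j, ((a j : ℕ) : ℤ) * hI u v j)
          + Complex.I ^ (-(∑ j, ((a j : ℕ) : ℤ) * hI u v j))
          + Complex.I ^ (-(1 + ∑ j, ((a j : ℕ) : ℤ) * gI u v j))) := by
  have hsum : trigArg (dotR a u) + trigArg (dotR a v)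
      = Real.pi/2 * (((1 + ∑ j, ((a j : ℕ) : ℤ) * gI u v j : ℤ) : ℝ)) := by
    unfold trigArg dotR gI
    push_cast
    rw [show ∑ x, ((a x : ℕ):ℝ) * (((u x : ℕ):ℝ) + ((v x : ℕ):ℝ))
      = ∑ x, (((a x : ℕ):ℝ) * ((u x : ℕ):ℝ) + ((a x : ℕ):ℝ) * ((v x : ℕ):ℝ)) from
        Finset.sum_congr rfl fun j _ => by ring, Finset.sum_add_distrib]
    ring
  have hdiff : trigArg (dotR a u) - trigArg (dotR a v)
      = Real.pi/2 * (((∑ j, ((a j : ℕ) : ℤ) * hI u v j : ℤ) : ℝ)) := by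
    unfold trigArg dotR hI
    push_cast
    rw [show ∑ x, ((a x : ℕ):ℝ) * (((u x : ℕ):ℝ) - ((v x : ℕ):ℝ))
      = ∑ x, (((a x : ℕ):ℝ) * ((u x : ℕ):ℝ) - ((a x : ℕ):ℝ) * ((v x : ℕ):ℝ)) from
        Finset.sum_congr rfl fun j _ => by ring, Finset.sum_sub_distrib]
    ring
  have hpc : Real.cos (trigArg (dotR a u)) * Real.cos (trigArg (dotR a v))
      = (Real.cos (trigArg (dotR a u) + trigArg (dotR a v))
        + Real.cos (trigArg (dotR a u) - trigArg (dotR a v)))/2 := by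
    rw [Real.cos_add, Real.cos_sub]; ring
  rw [hpc, hsum, hdiff, Complex.ofReal_div, Complex.ofReal_add, key_cos, key_cos]
  push_cast
  ring

lemma V_eq (u v : Fin n → Fin 4) (hd : PairwiseDisj S1 S2 S3) :
    ((V0101 u v S1 S2 S3 : ℝ) : ℂ)
      = ((coefPow n (2*S1.card + S2.card + S3.card) : ℝ):ℂ) * (1/4) *
        (Complex.I * ∏ j, cw S1 S2 S3 (gI u v) j
          + ∏ j, cw S1 S2 S3 (hI u v) j
          + ∏ j, cw S1 S2 S3 (fun j => -(hI u v j)) j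
          + Complex.I⁻¹ * ∏ j, cw S1 S2 S3 (fun j => -(gI u v j)) j) := by
  have step1 : ∀ a : Fin n → Fin 4,
      ((coefPow n (2*S1.card + S2.card + S3.card) *
        Real.cos (trigArg (dotR a u)) * Real.cos (trigArg (dotR a v)) * psi S1 S2 S3 a : ℝ) : ℂ)
      = ((coefPow n (2*S1.card + S2.card + S3.card) : ℝ):ℂ) * (1/4) * Complex.I *
          (Complex.I ^ (∑ j, ((a j : ℕ) : ℤ) * gI u v j) * ((psi S1 S2 S3 a : ℝ):ℂ))
        + ((coefPow n (2*S1.card + S2.card + S3.card) : ℝ):ℂ) * (1/4) *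
          (Complex.I ^ (∑ j, ((a j : ℕ) : ℤ) * hI u v j) * ((psi S1 S2 S3 a : ℝ):ℂ))
        + ((coefPow n (2*S1.card + S2.card + S3.card) : ℝ):ℂ) * (1/4) *
          (Complex.I ^ (∑ j, ((a j : ℕ) : ℤ) * (-(hI u v j))) * ((psi S1 S2 S3 a : ℝ):ℂ))
        + ((coefPow n (2*S1.card + S2.card + S3.card) : ℝ):ℂ) * (1/4) * Complex.I⁻¹ *
          (Complex.I ^ (∑ j, ((a j : ℕ) : ℤ) * (-(gI u v j))) * ((psi S1 S2 S3 a : ℝ):ℂ)) := by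
    intro a
    have hmm : ((coefPow n (2*S1.card + S2.card + S3.card) *
        Real.cos (trigArg (dotR a u)) * Real.cos (trigArg (dotR a v)) * psi S1 S2 S3 a : ℝ) : ℂ)
      = ((coefPow n (2*S1.card + S2.card + S3.card) : ℝ):ℂ) *
        ((Real.cos (trigArg (dotR a u)) * Real.cos (trigArg (dotR a v)) : ℝ) : ℂ) *
        ((psi S1 S2 S3 a : ℝ):ℂ) := by push_cast; ring
    rw [hmm, coscos]
    have hng : Complex.I ^ (-(1 + ∑ j, ((a j : ℕ) : ℤ) * gI u v j))
        = Complex.I⁻¹ * Complex.I ^ (∑ j, ((a j : ℕ) : ℤ) * (-(gI u v j))) := by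
      rw [show (∑ j, ((a j : ℕ) : ℤ) * (-(gI u v j))) = -(∑ j, ((a j : ℕ) : ℤ) * gI u v j) by
        rw [← Finset.sum_neg_distrib]; exact Finset.sum_congr rfl fun j _ => by ring]
      rw [neg_add, zpow_add₀ Complex.I_ne_zero, zpow_neg, zpow_one]
    have hig : Complex.I ^ (1 + ∑ j, ((a j : ℕ) : ℤ) * gI u v j)
        = Complex.I * Complex.I ^ (∑ j, ((a j : ℕ) : ℤ) * gI u v j) := by
      rw [zpow_add₀ Complex.I_ne_zero, zpow_one]
    have hnh : Complex.I ^ (-(∑ j, ((a j : ℕ) : ℤ) * hI u v j))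
        = Complex.I ^ (∑ j, ((a j : ℕ) : ℤ) * (-(hI u v j))) := by
      rw [show (∑ j, ((a j : ℕ) : ℤ) * (-(hI u v j))) = -(∑ j, ((a j : ℕ) : ℤ) * hI u v j) by
        rw [← Finset.sum_neg_distrib]; exact Finset.sum_congr rfl fun j _ => by ring]
    rw [hng, hig, hnh]
    ring
  unfold V0101
  push_cast
  rw [Finset.sum_congr rfl fun a _ => by exact_mod_cast step1 a]
  rw [Finset.sum_add_distrib, Finset.sum_add_distrib, Finset.sum_add_distrib,
    ← Finset.mul_sum, ← Finset.mul_sum, ← Finset.mul_sum, ← Finset.mul_sum]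
  rw [core S1 S2 S3 hd (gI u v), core S1 S2 S3 hd (hI u v),
    core S1 S2 S3 hd (fun j => -(hI u v j)), core S1 S2 S3 hd (fun j => -(gI u v j))]
  ring
end LA7
namespace LA7
variable {n : ℕ} {S1 S2 S3 : Finset (Fin n)} {u v : Fin n → Fin 4}

lemma mem_KS {j : Fin n} {k s : Fin 4} :
    j ∈ DeltaKS u v k s ↔ ((u j : ℕ) = (k : ℕ) ∧ (v j : ℕ) = (s : ℕ)) := by
  simp [DeltaKS, Finset.mem_filter, Fin.ext_iff]

lemma mem_DG {j : Fin n} {k : ℕ} : j ∈ DeltaG u v k ↔ ((u j : ℕ) + (v j : ℕ)) % 4 = k := by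
  simp [DeltaG, Finset.mem_filter]

lemma mem_DH {j : Fin n} {k : ℤ} :
    j ∈ DeltaH u v k ↔ (((u j : ℕ) : ℤ) - ((v j : ℕ) : ℤ)) % 4 = k := by
  simp [DeltaH, Finset.mem_filter]

/-- no both-odd coordinates, from λ₅+λ₆ = 0 -/
lemma noBothOdd (h56 : lam5 u v + lam6 u v = 0) (j : Fin n) :
    ¬((u j : ℕ) % 2 = 1 ∧ (v j : ℕ) % 2 = 1) := by
  have e0 : freq u v 1 1 = 0 ∧ freq u v 3 3 = 0 ∧ freq u v 1 3 = 0 ∧ freq u v 3 1 = 0 := by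
    unfold lam5 lam6 at h56; omega
  have hm : ∀ (k s : Fin 4), freq u v k s = 0 → ¬((u j : ℕ) = (k:ℕ) ∧ (v j : ℕ) = (s:ℕ)) := by
    intro k s h hc
    have : j ∈ DeltaKS u v k s := mem_KS.2 hc
    rw [Finset.card_eq_zero.1 h] at this
    exact absurd this (Finset.notMem_empty j)
  have h1 := hm 1 1 e0.1
  have h2 := hm 3 3 e0.2.1
  have h3 := hm 1 3 e0.2.2.1
  have h4 := hm 3 1 e0.2.2.2
  have hu := (u j).isLt
  have hv := (v j).isLt
  simp only [Fin.isValue, Fin.val_one] at h1 h2 h3 h4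
  omega

lemma GoodW_neg {w : Fin n → ℤ} :
    GoodW S1 S2 S3 (fun j => -(w j)) ↔ GoodW S1 S2 S3 w := by
  constructor
  · intro H j
    obtain ⟨h1, h2, h3⟩ := H j
    refine ⟨fun m => ?_, fun m => ?_, fun m => ?_⟩
    · have hx : -(w j) % 4 = 2 := h1 m; omega
    · have hx : -(w j) % 4 = 1 ∨ -(w j) % 4 = 3 := h2 m; rcases hx with hx|hx <;> omega
    · have hx : -(w j) % 4 = 0 := h3 m; omega
  · intro H j
    obtain ⟨h1, h2, h3⟩ := H j
    refine ⟨fun m => ?_, fun m => ?_, fun m => ?_⟩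
    · have hx := h1 m; show -(w j) % 4 = 2; omega
    · have hx := h2 m; show -(w j) % 4 = 1 ∨ -(w j) % 4 = 3; rcases hx with hx|hx <;> omega
    · have hx := h3 m; show -(w j) % 4 = 0; omega

lemma gI_mod (j : Fin n) : gI u v j % 4 = ((((u j : ℕ) + (v j : ℕ)) % 4 : ℕ) : ℤ) := by
  unfold gI; omega

/-- membership unions as nat facts -/
lemma mem_S1target {j : Fin n} :
    j ∈ DeltaKS u v 0 2 ∪ DeltaKS u v 2 0 ↔
      (((u j : ℕ) = 0 ∧ (v j : ℕ) = 2) ∨ ((u j : ℕ) = 2 ∧ (v j : ℕ) = 0)) := by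
  simp [Finset.mem_union, mem_KS]

lemma mem_S23target {j : Fin n} :
    j ∈ DeltaOne u v ∪ DeltaTwo u v ↔
      (((u j : ℕ) + (v j : ℕ)) % 2 = 1) := by
  unfold DeltaOne DeltaTwo
  simp only [Finset.mem_union, mem_KS]
  have hu := (u j).isLt
  have hv := (v j).isLt
  constructor
  · intro h
    rcases h with ((((h|h)|h)|h)|(((h|h)|h)|h)) <;> omega
  · intro h
    simp only [Fin.isValue, Fin.val_zero, Fin.val_one, Fin.val_two,
      show ((3:Fin 4):ℕ) = 3 from rfl]
    omega

lemma mem_S4target {j : Fin n} :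
    j ∈ DeltaKS u v 0 0 ∪ DeltaKS u v 2 2 ↔
      (((u j : ℕ) = 0 ∧ (v j : ℕ) = 0) ∨ ((u j : ℕ) = 2 ∧ (v j : ℕ) = 2)) := by
  simp [Finset.mem_union, mem_KS]

lemma goodG_iff (h56 : lam5 u v + lam6 u v = 0) (hd : PairwiseDisj S1 S2 S3) :
    GoodW S1 S2 S3 (gI u v) ↔ CondA23 u v S1 S2 S3 := by
  obtain ⟨d12, d13, d23⟩ := hd
  constructor
  · intro hw
    have res : ∀ j : Fin n, j ∈ S1 → ((u j:ℕ) + (v j:ℕ)) % 4 = 2 := by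
      intro j hj
      have := (hw j).1 hj
      rw [gI_mod] at this
      omega
    have res23 : ∀ j : Fin n, (j ∈ S2 ∨ j ∈ S3) →
        (((u j:ℕ) + (v j:ℕ)) % 4 = 1 ∨ ((u j:ℕ) + (v j:ℕ)) % 4 = 3) := by
      intro j hj
      have := (hw j).2.1 hj
      rw [gI_mod] at this
      omega
    have res4 : ∀ j : Fin n, (j ∉ S1 ∧ j ∉ S2 ∧ j ∉ S3) → ((u j:ℕ) + (v j:ℕ)) % 4 = 0 := by
      intro j hj
      have := (hw j).2.2 hj
      rw [gI_mod] at this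
      omega
    refine ⟨?_, ?_, ?_⟩
    · ext j
      rw [mem_S1target]
      have hnb := noBothOdd h56 j
      have hu := (u j).isLt
      have hv := (v j).isLt
      constructor
      · intro hj
        have := res j hj
        omega
      · intro hj
        by_cases m1 : j ∈ S1
        · exact m1
        · exfalso
          by_cases m2 : j ∈ S2
          · have := res23 j (Or.inl m2); omega
          · by_cases m3 : j ∈ S3
            · have := res23 j (Or.inr m3); omega
            · have := res4 j ⟨m1, m2, m3⟩; omega
    · ext j
      rw [Finset.mem_union, mem_S23target]
      have hnb := noBothOdd h56 j
      have hu := (u j).isLt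
      have hv := (v j).isLt
      constructor
      · intro hj
        rw [← Finset.mem_union] at hj
        rw [Finset.mem_union] at hj
        have := res23 j hj
        omega
      · intro hj
        by_cases m2 : j ∈ S2
        · exact Or.inl m2
        · by_cases m3 : j ∈ S3
          · exact Or.inr m3
          · exfalso
            by_cases m1 : j ∈ S1
            · have := res j m1; omega
            · have := res4 j ⟨m1, m2, m3⟩; omega
    · ext j
      simp only [Finset.mem_sdiff, Finset.mem_univ, true_and]
      rw [mem_S4target]
      simp only [Finset.mem_union]
      have hnb := noBothOdd h56 j
      have hu := (u j).isLt
      have hv := (v j).isLt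
      constructor
      · intro hj
        push_neg at hj
        have := res4 j ⟨hj.1.1, hj.1.2, hj.2⟩
        omega
      · intro hj
        have m1 : j ∉ S1 := fun hc => by have := res j hc; omega
        have m2 : j ∉ S2 := fun hc => by have := res23 j (Or.inl hc); omega
        have m3 : j ∉ S3 := fun hc => by have := res23 j (Or.inr hc); omega
        tauto
  · intro hc j
    have hu := (u j).isLt
    have hv := (v j).isLt
    refine ⟨fun m => ?_, fun m => ?_, fun m => ?_⟩
    · have := mem_S1target.1 (hc.1 ▸ m)
      rw [gI_mod]
      omega
    · have hj : j ∈ S2 ∪ S3 := Finset.mem_union.2 m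
      have := mem_S23target.1 (hc.2.1 ▸ hj)
      rw [gI_mod]
      omega
    · have hj : j ∈ Finset.univ \ (S1 ∪ S2 ∪ S3) := by
        simp only [Finset.mem_sdiff, Finset.mem_univ, true_and, Finset.mem_union]
        push_neg
        exact ⟨⟨m.1, m.2.1⟩, m.2.2⟩
      have := mem_S4target.1 (hc.2.2 ▸ hj)
      rw [gI_mod]
      omega
end LA7
namespace LA7
variable {n : ℕ} {S1 S2 S3 : Finset (Fin n)} {u v : Fin n → Fin 4}

lemma goodH_iff (h56 : lam5 u v + lam6 u v = 0) (hd : PairwiseDisj S1 S2 S3) :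
    GoodW S1 S2 S3 (hI u v) ↔ CondA23 u v S1 S2 S3 := by
  obtain ⟨d12, d13, d23⟩ := hd
  constructor
  · intro hw
    have res : ∀ j : Fin n, j ∈ S1 → (((u j:ℕ):ℤ) - ((v j:ℕ):ℤ)) % 4 = 2 := fun j hj => (hw j).1 hj
    have res23 : ∀ j : Fin n, (j ∈ S2 ∨ j ∈ S3) →
        ((((u j:ℕ):ℤ) - ((v j:ℕ):ℤ)) % 4 = 1 ∨ (((u j:ℕ):ℤ) - ((v j:ℕ):ℤ)) % 4 = 3) :=
      fun j hj => (hw j).2.1 hj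
    have res4 : ∀ j : Fin n, (j ∉ S1 ∧ j ∉ S2 ∧ j ∉ S3) → (((u j:ℕ):ℤ) - ((v j:ℕ):ℤ)) % 4 = 0 :=
      fun j hj => (hw j).2.2 hj
    refine ⟨?_, ?_, ?_⟩
    · ext j
      rw [mem_S1target]
      have hnb := noBothOdd h56 j
      have hu := (u j).isLt
      have hv := (v j).isLt
      constructor
      · intro hj
        have := res j hj
        omega
      · intro hj
        by_cases m1 : j ∈ S1
        · exact m1
        · exfalso
          by_cases m2 : j ∈ S2
          · rcases res23 j (Or.inl m2) with h|h <;> omega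
          · by_cases m3 : j ∈ S3
            · rcases res23 j (Or.inr m3) with h|h <;> omega
            · have := res4 j ⟨m1, m2, m3⟩; omega
    · ext j
      rw [Finset.mem_union, mem_S23target]
      have hnb := noBothOdd h56 j
      have hu := (u j).isLt
      have hv := (v j).isLt
      constructor
      · intro hj
        rcases res23 j hj with h|h <;> omega
      · intro hj
        by_cases m2 : j ∈ S2
        · exact Or.inl m2
        · by_cases m3 : j ∈ S3
          · exact Or.inr m3
          · exfalso
            by_cases m1 : j ∈ S1
            · have := res j m1; omega
            · have := res4 j ⟨m1, m2, m3⟩; omega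
    · ext j
      simp only [Finset.mem_sdiff, Finset.mem_univ, true_and]
      rw [mem_S4target]
      simp only [Finset.mem_union]
      have hnb := noBothOdd h56 j
      have hu := (u j).isLt
      have hv := (v j).isLt
      constructor
      · intro hj
        push_neg at hj
        have := res4 j ⟨hj.1.1, hj.1.2, hj.2⟩
        omega
      · intro hj
        have m1 : j ∉ S1 := fun hc => by have := res j hc; omega
        have m2 : j ∉ S2 := fun hc => by rcases res23 j (Or.inl hc) with h|h <;> omega
        have m3 : j ∉ S3 := fun hc => by rcases res23 j (Or.inr hc) with h|h <;> omega
        tauto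
  · intro hc j
    have hu := (u j).isLt
    have hv := (v j).isLt
    refine ⟨fun m => ?_, fun m => ?_, fun m => ?_⟩
    · have := mem_S1target.1 (hc.1 ▸ m)
      show (((u j:ℕ):ℤ) - ((v j:ℕ):ℤ)) % 4 = 2
      omega
    · have hj : j ∈ S2 ∪ S3 := Finset.mem_union.2 m
      have := mem_S23target.1 (hc.2.1 ▸ hj)
      show (((u j:ℕ):ℤ) - ((v j:ℕ):ℤ)) % 4 = 1 ∨ (((u j:ℕ):ℤ) - ((v j:ℕ):ℤ)) % 4 = 3
      omega
    · have hj : j ∈ Finset.univ \ (S1 ∪ S2 ∪ S3) := by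
        simp only [Finset.mem_sdiff, Finset.mem_univ, true_and, Finset.mem_union]
        push_neg
        exact ⟨⟨m.1, m.2.1⟩, m.2.2⟩
      have := mem_S4target.1 (hc.2.2 ▸ hj)
      show (((u j:ℕ):ℤ) - ((v j:ℕ):ℤ)) % 4 = 0
      omega
end LA7
namespace LA7
variable {n : ℕ} {S1 S2 S3 : Finset (Fin n)} {u v : Fin n → Fin 4}

def KA1 (u v : Fin n → Fin 4) : Finset (Fin n) := DeltaKS u v 1 0 ∪ DeltaKS u v 3 2
def KB1 (u v : Fin n → Fin 4) : Finset (Fin n) := DeltaKS u v 1 2 ∪ DeltaKS u v 3 0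
def KA2 (u v : Fin n → Fin 4) : Finset (Fin n) := DeltaKS u v 0 1 ∪ DeltaKS u v 2 3
def KB2 (u v : Fin n → Fin 4) : Finset (Fin n) := DeltaKS u v 0 3 ∪ DeltaKS u v 2 1

lemma mem_KA1 {j} : j ∈ KA1 u v ↔ (((u j:ℕ) = 1 ∧ (v j:ℕ) = 0) ∨ ((u j:ℕ) = 3 ∧ (v j:ℕ) = 2)) := by
  simp [KA1, Finset.mem_union, mem_KS, show ((3:Fin 4):ℕ) = 3 from rfl]
lemma mem_KB1 {j} : j ∈ KB1 u v ↔ (((u j:ℕ) = 1 ∧ (v j:ℕ) = 2) ∨ ((u j:ℕ) = 3 ∧ (v j:ℕ) = 0)) := by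
  simp [KB1, Finset.mem_union, mem_KS, show ((3:Fin 4):ℕ) = 3 from rfl]
lemma mem_KA2 {j} : j ∈ KA2 u v ↔ (((u j:ℕ) = 0 ∧ (v j:ℕ) = 1) ∨ ((u j:ℕ) = 2 ∧ (v j:ℕ) = 3)) := by
  simp [KA2, Finset.mem_union, mem_KS, show ((3:Fin 4):ℕ) = 3 from rfl]
lemma mem_KB2 {j} : j ∈ KB2 u v ↔ (((u j:ℕ) = 0 ∧ (v j:ℕ) = 3) ∨ ((u j:ℕ) = 2 ∧ (v j:ℕ) = 1)) := by
  simp [KB2, Finset.mem_union, mem_KS, show ((3:Fin 4):ℕ) = 3 from rfl]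

lemma DG1 : DeltaG u v 1 = KA1 u v ∪ KA2 u v := by
  ext j
  rw [mem_DG, Finset.mem_union, mem_KA1, mem_KA2]
  have hu := (u j).isLt; have hv := (v j).isLt
  omega
lemma DG3 : DeltaG u v 3 = KB1 u v ∪ KB2 u v := by
  ext j
  rw [mem_DG, Finset.mem_union, mem_KB1, mem_KB2]
  have hu := (u j).isLt; have hv := (v j).isLt
  omega
lemma DH1 : DeltaH u v 1 = KA1 u v ∪ KB2 u v := by
  ext j
  rw [mem_DH, Finset.mem_union, mem_KA1, mem_KB2]
  have hu := (u j).isLt; have hv := (v j).isLt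
  omega
lemma DH3 : DeltaH u v 3 = KA2 u v ∪ KB1 u v := by
  ext j
  rw [mem_DH, Finset.mem_union, mem_KA2, mem_KB1]
  have hu := (u j).isLt; have hv := (v j).isLt
  omega
lemma DO : DeltaOne u v = KA1 u v ∪ KB1 u v := by
  ext j
  unfold DeltaOne
  simp only [Finset.mem_union, mem_KS, mem_KA1, mem_KB1]
  tauto
lemma DT : DeltaTwo u v = KA2 u v ∪ KB2 u v := by
  ext j
  unfold DeltaTwo
  simp only [Finset.mem_union, mem_KS, mem_KA2, mem_KB2]
  tauto

lemma disjK {X Y : Finset (Fin n)}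
    (hX : ∀ j, j ∈ X ↔ (((u j:ℕ) = (px:ℕ) ∧ (v j:ℕ) = px') ∨ ((u j:ℕ) = py ∧ (v j:ℕ) = py'))) :
    True := trivial

lemma dAA : Disjoint (KA1 u v) (KA2 u v) := by
  rw [Finset.disjoint_left]
  intro j h1 h2
  rw [mem_KA1] at h1; rw [mem_KA2] at h2
  omega
lemma dBB : Disjoint (KB1 u v) (KB2 u v) := by
  rw [Finset.disjoint_left]
  intro j h1 h2
  rw [mem_KB1] at h1; rw [mem_KB2] at h2
  omega
lemma dA1B2 : Disjoint (KA1 u v) (KB2 u v) := by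
  rw [Finset.disjoint_left]
  intro j h1 h2
  rw [mem_KA1] at h1; rw [mem_KB2] at h2
  omega
lemma dA2B1 : Disjoint (KA2 u v) (KB1 u v) := by
  rw [Finset.disjoint_left]
  intro j h1 h2
  rw [mem_KA2] at h1; rw [mem_KB1] at h2
  omega
lemma dA1B1 : Disjoint (KA1 u v) (KB1 u v) := by
  rw [Finset.disjoint_left]
  intro j h1 h2
  rw [mem_KA1] at h1; rw [mem_KB1] at h2
  omega
lemma dA2B2 : Disjoint (KA2 u v) (KB2 u v) := by
  rw [Finset.disjoint_left]
  intro j h1 h2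
  rw [mem_KA2] at h1; rw [mem_KB2] at h2
  omega

lemma card_inter_union (S X Y : Finset (Fin n)) (h : Disjoint X Y) :
    (S ∩ (X ∪ Y)).card = (S ∩ X).card + (S ∩ Y).card := by
  rw [Finset.inter_union_distrib_left]
  exact Finset.card_union_of_disjoint (h.mono Finset.inter_subset_right Finset.inter_subset_right)

lemma cardKS_disj {k1 s1 k2 s2 : Fin 4} (h : ¬(k1 = k2 ∧ s1 = s2)) :
    Disjoint (DeltaKS u v k1 s1) (DeltaKS u v k2 s2) := by
  rw [Finset.disjoint_left]
  intro j h1 h2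
  rw [mem_KS] at h1 h2
  exact h ⟨Fin.ext (h1.1 ▸ h2.1 ▸ rfl), Fin.ext (h1.2 ▸ h2.2 ▸ rfl)⟩

lemma cardKA1 : (KA1 u v).card = freq u v 1 0 + freq u v 3 2 :=
  Finset.card_union_of_disjoint (cardKS_disj (by decide))
lemma cardKB1 : (KB1 u v).card = freq u v 1 2 + freq u v 3 0 :=
  Finset.card_union_of_disjoint (cardKS_disj (by decide))
lemma cardKA2 : (KA2 u v).card = freq u v 0 1 + freq u v 2 3 :=
  Finset.card_union_of_disjoint (cardKS_disj (by decide))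
lemma cardKB2 : (KB2 u v).card = freq u v 0 3 + freq u v 2 1 :=
  Finset.card_union_of_disjoint (cardKS_disj (by decide))

lemma filter_g (S : Finset (Fin n)) (k : ℕ) (hk : k < 4) :
    S.filter (fun j => gI u v j % 4 = (k:ℤ)) = S ∩ DeltaG u v k := by
  ext j
  rw [Finset.mem_filter, Finset.mem_inter, mem_DG, gI_mod]
  constructor
  · exact fun ⟨h1, h2⟩ => ⟨h1, by omega⟩
  · exact fun ⟨h1, h2⟩ => ⟨h1, by omega⟩

lemma filter_h (S : Finset (Fin n)) (k : ℤ) :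
    S.filter (fun j => hI u v j % 4 = k) = S ∩ DeltaH u v k := by
  ext j
  rw [Finset.mem_filter, Finset.mem_inter, mem_DH]
  exact Iff.rfl

lemma split_card (hc2 : S2 ∪ S3 = DeltaOne u v ∪ DeltaTwo u v) (d23 : Disjoint S2 S3)
    (X : Finset (Fin n)) (hX : X ⊆ DeltaOne u v ∪ DeltaTwo u v) :
    (S2 ∩ X).card + (S3 ∩ X).card = X.card := by
  rw [← Finset.card_union_of_disjoint
    (d23.mono Finset.inter_subset_left Finset.inter_subset_left)]
  congr 1
  rw [← Finset.union_inter_distrib_right, hc2]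
  exact Finset.inter_eq_right.2 hX

lemma counts (h56 : lam5 u v + lam6 u v = 0) (hd : PairwiseDisj S1 S2 S3)
    (hc : CondA23 u v S1 S2 S3) :
    ((S3 ∩ DeltaG u v 1).card = (S3 ∩ KA1 u v).card + (S3 ∩ KA2 u v).card) ∧
    ((S3 ∩ DeltaOne u v).card = (S3 ∩ KA1 u v).card + (S3 ∩ KB1 u v).card) ∧
    ((S3 ∩ DeltaTwo u v).card = (S3 ∩ KA2 u v).card + (S3 ∩ KB2 u v).card) ∧
    (qexp S2 S3 (gI u v) =
      ((freq u v 1 2 : ℤ) + freq u v 3 0 + freq u v 0 3 + freq u v 2 1)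
        - ((freq u v 1 0 : ℤ) + freq u v 3 2 + freq u v 0 1 + freq u v 2 3)
        + 2*(S3 ∩ KA1 u v).card + 2*(S3 ∩ KA2 u v).card
        - 2*(S3 ∩ KB1 u v).card - 2*(S3 ∩ KB2 u v).card) ∧
    (qexp S2 S3 (hI u v) =
      ((freq u v 1 2 : ℤ) + freq u v 3 0 + freq u v 0 1 + freq u v 2 3)
        - ((freq u v 1 0 : ℤ) + freq u v 3 2 + freq u v 0 3 + freq u v 2 1)
        + 2*(S3 ∩ KA1 u v).card + 2*(S3 ∩ KB2 u v).card
        - 2*(S3 ∩ KB1 u v).card - 2*(S3 ∩ KA2 u v).card) ∧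
    (S2.card + S3.card = lam1 u v + lam2 u v + lam3 u v + lam4 u v) := by
  obtain ⟨d12, d13, d23⟩ := hd
  have hc2 := hc.2.1
  -- subset facts
  have sA1 : KA1 u v ⊆ DeltaOne u v ∪ DeltaTwo u v := by
    rw [DO]; exact Finset.Subset.trans Finset.subset_union_left Finset.subset_union_left
  have sB1 : KB1 u v ⊆ DeltaOne u v ∪ DeltaTwo u v := by
    rw [DO]; exact Finset.Subset.trans Finset.subset_union_right Finset.subset_union_left
  have sA2 : KA2 u v ⊆ DeltaOne u v ∪ DeltaTwo u v := by
    rw [DT]; exact Finset.Subset.trans Finset.subset_union_left Finset.subset_union_right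
  have sB2 : KB2 u v ⊆ DeltaOne u v ∪ DeltaTwo u v := by
    rw [DT]; exact Finset.Subset.trans Finset.subset_union_right Finset.subset_union_right
  have spA1 := split_card hc2 d23 _ sA1
  have spB1 := split_card hc2 d23 _ sB1
  have spA2 := split_card hc2 d23 _ sA2
  have spB2 := split_card hc2 d23 _ sB2
  have e1 : (S3 ∩ DeltaG u v 1).card = (S3 ∩ KA1 u v).card + (S3 ∩ KA2 u v).card := by
    rw [DG1, card_inter_union _ _ _ dAA]
  have e2 : (S3 ∩ DeltaOne u v).card = (S3 ∩ KA1 u v).card + (S3 ∩ KB1 u v).card := by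
    rw [DO, card_inter_union _ _ _ dA1B1]
  have e3 : (S3 ∩ DeltaTwo u v).card = (S3 ∩ KA2 u v).card + (S3 ∩ KB2 u v).card := by
    rw [DT, card_inter_union _ _ _ dA2B2]
  have eg : qexp S2 S3 (gI u v) =
      ((freq u v 1 2 : ℤ) + freq u v 3 0 + freq u v 0 3 + freq u v 2 1)
        - ((freq u v 1 0 : ℤ) + freq u v 3 2 + freq u v 0 1 + freq u v 2 3)
        + 2*(S3 ∩ KA1 u v).card + 2*(S3 ∩ KA2 u v).card
        - 2*(S3 ∩ KB1 u v).card - 2*(S3 ∩ KB2 u v).card := by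
    unfold qexp
    rw [show (3:ℤ) = ((3:ℕ):ℤ) by norm_num, show (1:ℤ) = ((1:ℕ):ℤ) by norm_num]
    rw [filter_g S2 3 (by norm_num), filter_g S2 1 (by norm_num),
      filter_g S3 3 (by norm_num), filter_g S3 1 (by norm_num)]
    rw [DG1, DG3, card_inter_union _ _ _ dAA, card_inter_union _ _ _ dBB,
      card_inter_union _ _ _ dAA, card_inter_union _ _ _ dBB]
    have c1 := cardKA1 (u := u) (v := v)
    have c2 := cardKB1 (u := u) (v := v)
    have c3 := cardKA2 (u := u) (v := v)
    have c4 := cardKB2 (u := u) (v := v)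
    push_cast
    omega
  have eh : qexp S2 S3 (hI u v) =
      ((freq u v 1 2 : ℤ) + freq u v 3 0 + freq u v 0 1 + freq u v 2 3)
        - ((freq u v 1 0 : ℤ) + freq u v 3 2 + freq u v 0 3 + freq u v 2 1)
        + 2*(S3 ∩ KA1 u v).card + 2*(S3 ∩ KB2 u v).card
        - 2*(S3 ∩ KB1 u v).card - 2*(S3 ∩ KA2 u v).card := by
    unfold qexp
    rw [filter_h S2 3, filter_h S2 1, filter_h S3 3, filter_h S3 1]
    rw [DH1, DH3, card_inter_union _ _ _ dA1B2, card_inter_union _ _ _ dA2B1,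
      card_inter_union _ _ _ dA1B2, card_inter_union _ _ _ dA2B1]
    have c1 := cardKA1 (u := u) (v := v)
    have c2 := cardKB1 (u := u) (v := v)
    have c3 := cardKA2 (u := u) (v := v)
    have c4 := cardKB2 (u := u) (v := v)
    push_cast
    omega
  have ecard : S2.card + S3.card = lam1 u v + lam2 u v + lam3 u v + lam4 u v := by
    have h1 : (S2 ∪ S3).card = S2.card + S3.card := Finset.card_union_of_disjoint d23
    rw [hc2] at h1
    have hdisj : Disjoint (DeltaOne u v) (DeltaTwo u v) := by
      rw [DO, DT, Finset.disjoint_union_left, Finset.disjoint_union_right, Finset.disjoint_union_right]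
      exact ⟨⟨dAA, dA1B2⟩, ⟨dA2B1.symm, dBB⟩⟩
    rw [Finset.card_union_of_disjoint hdisj, DO, DT,
      Finset.card_union_of_disjoint dA1B1, Finset.card_union_of_disjoint dA2B2,
      cardKA1, cardKB1, cardKA2, cardKB2] at h1
    unfold lam1 lam2 lam3 lam4
    omega
  exact ⟨e1, e2, e3, eg, eh, ecard⟩
end LA7
namespace LA7
variable {n : ℕ} {S1 S2 S3 : Finset (Fin n)} {u v : Fin n → Fin 4}

lemma qexp_neg (w : Fin n → ℤ) : qexp S2 S3 (fun j => -(w j)) = - qexp S2 S3 w := by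
  have f13 : ∀ (S : Finset (Fin n)), S.filter (fun j => (-(w j)) % 4 = 3)
      = S.filter (fun j => w j % 4 = 1) := by
    intro S; ext j
    simp only [Finset.mem_filter]
    constructor <;> (rintro ⟨h1, h2⟩; exact ⟨h1, by omega⟩)
  have f31 : ∀ (S : Finset (Fin n)), S.filter (fun j => (-(w j)) % 4 = 1)
      = S.filter (fun j => w j % 4 = 3) := by
    intro S; ext j
    simp only [Finset.mem_filter]
    constructor <;> (rintro ⟨h1, h2⟩; exact ⟨h1, by omega⟩)
  unfold qexp
  rw [f13, f31, f13, f31]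
  ring

lemma card_compl (hd : PairwiseDisj S1 S2 S3) :
    (Finset.univ \ (S1 ∪ S2 ∪ S3)).card + S1.card + S2.card + S3.card = n := by
  obtain ⟨d12, d13, d23⟩ := hd
  have hu : (S1 ∪ S2 ∪ S3).card = S1.card + S2.card + S3.card := by
    rw [Finset.card_union_of_disjoint (by rw [Finset.disjoint_union_left]; exact ⟨d13, d23⟩),
      Finset.card_union_of_disjoint d12]
  have hle : (S1 ∪ S2 ∪ S3).card ≤ (Finset.univ : Finset (Fin n)).card :=
    Finset.card_le_card (Finset.subset_univ _)
  rw [Finset.card_sdiff_of_subset (Finset.subset_univ _), Finset.card_univ, Fintype.card_fin] at *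
  omega

lemma neg_one_eta (m : ℕ) : (-1:ℂ)^m = eta ^ (4*(m:ℤ)) := by
  rw [show (4*(m:ℤ)) = ((4*m:ℕ):ℤ) by push_cast; ring, zpow_natCast, pow_mul, eta_pow4]

lemma Qfun_eq (b : ℕ) (bs : ℤ) (mu : ℕ) :
    Qfun b bs mu = (((2:ℝ) ^ (((b:ℝ)+1)/2) : ℝ):ℂ)⁻¹ *
      (eta ^ (1 + bs - 2*(mu:ℤ)) + eta ^ (2*(mu:ℤ) - 1 - bs)) := by
  unfold Qfun
  rw [exp_quarter, show -(Complex.I * ((Real.pi:ℂ)/4) * (((1 + bs : ℤ)):ℂ))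
      = Complex.I * ((Real.pi:ℂ)/4) * (((-(1+bs) : ℤ)):ℂ) by push_cast; ring, exp_quarter]
  rw [show Complex.I ^ mu = eta ^ (2*(mu:ℤ)) from by
    rw [show (2*(mu:ℤ)) = ((2*mu:ℕ):ℤ) by push_cast; ring, zpow_natCast, pow_mul, eta_sq],
    neg_one_eta]
  have hX : (((2:ℝ) ^ (((b:ℝ)+1)/2) : ℝ):ℂ) ≠ 0 :=
    Complex.ofReal_ne_zero.2 (ne_of_gt (Real.rpow_pos_of_pos (by norm_num) _))
  have k1 : eta ^ (1 + bs - 2*(mu:ℤ)) = eta ^ (1+bs) / eta ^ (2*(mu:ℤ)) := by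
    rw [← zpow_sub₀ eta_ne]
  have k2 : eta ^ (2*(mu:ℤ) - 1 - bs) = eta ^ (4*(mu:ℤ)) * eta ^ (-(1+bs)) / eta ^ (2*(mu:ℤ)) := by
    rw [← zpow_add₀ eta_ne, ← zpow_sub₀ eta_ne]
    congr 1
    ring
  rw [k1, k2]
  have hz : eta ^ (2*(mu:ℤ)) ≠ 0 := zpow_ne_zero _ eta_ne
  field_simp

lemma eta_mul_expand (x1 x2 y1 y2 : ℤ) :
    (eta^x1 + eta^x2) * (eta^y1 + eta^y2)
      = eta^(x1+y1) + eta^(x1+y2) + eta^(x2+y1) + eta^(x2+y2) := by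
  rw [zpow_add₀ eta_ne, zpow_add₀ eta_ne, zpow_add₀ eta_ne, zpow_add₀ eta_ne]
  ring

lemma phase (a1 a2 b1 b2 B1 B2 : ℤ) :
    eta^((2:ℤ) + (B1+B2+2*a1+2*a2-2*b1-2*b2)) + eta^(B1-B2+2*a1+2*b2-2*b1-2*a2)
      + eta^(-(B1-B2+2*a1+2*b2-2*b1-2*a2)) + eta^(-(2:ℤ) + -(B1+B2+2*a1+2*a2-2*b1-2*b2))
    = eta^(4*(a1+a2)) *
        ((eta^(1+B1-2*(a1+b1)) + eta^(2*(a1+b1)-1-B1)) *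
          (eta^(1+B2-2*(a2+b2)) + eta^(2*(a2+b2)-1-B2))) := by
  rw [eta_mul_expand, mul_add, mul_add, mul_add,
    ← zpow_add₀ eta_ne, ← zpow_add₀ eta_ne, ← zpow_add₀ eta_ne, ← zpow_add₀ eta_ne]
  have t1 : eta^((2:ℤ) + (B1+B2+2*a1+2*a2-2*b1-2*b2))
      = eta^(4*(a1+a2) + (1+B1-2*(a1+b1) + (1+B2-2*(a2+b2)))) := eta_congr (by omega)
  have t2 : eta^(B1-B2+2*a1+2*b2-2*b1-2*a2)
      = eta^(4*(a1+a2) + (1+B1-2*(a1+b1) + (2*(a2+b2)-1-B2))) := eta_congr (by omega)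
  have t3 : eta^(-(B1-B2+2*a1+2*b2-2*b1-2*a2))
      = eta^(4*(a1+a2) + (2*(a1+b1)-1-B1 + (1+B2-2*(a2+b2)))) := eta_congr (by omega)
  have t4 : eta^(-(2:ℤ) + -(B1+B2+2*a1+2*a2-2*b1-2*b2))
      = eta^(4*(a1+a2) + (2*(a1+b1)-1-B1 + (2*(a2+b2)-1-B2))) := eta_congr (by omega)
  rw [t1, t2, t3, t4]
end LA7
namespace LA7

lemma main_pos {n : ℕ} (u v : Fin n → Fin 4) (S1 S2 S3 : Finset (Fin n))
    (h56 : lam5 u v + lam6 u v = 0) (hd : PairwiseDisj S1 S2 S3)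
    (hc : CondA23 u v S1 S2 S3) :
    ((V0101 u v S1 S2 S3 : ℝ) : ℂ) =
      (-1 : ℂ) ^ (S3 ∩ DeltaG u v 1).card *
        Qfun (lam1 u v + lam3 u v)
          ((freq u v 1 2 : ℤ) + (freq u v 3 0 : ℤ) - (freq u v 1 0 : ℤ) -
            (freq u v 3 2 : ℤ))
          ((S3 ∩ DeltaOne u v).card) *
        Qfun (lam2 u v + lam4 u v)
          ((freq u v 0 3 : ℤ) + (freq u v 2 1 : ℤ) - (freq u v 0 1 : ℤ) -
            (freq u v 2 3 : ℤ))
          ((S3 ∩ DeltaTwo u v).card) := by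
  have hg := (goodG_iff h56 hd).2 hc
  have hh := (goodH_iff h56 hd).2 hc
  obtain ⟨e1, e2, e3, eg, eh, ecard⟩ := counts h56 hd hc
  rw [V_eq u v hd, prod_cw_good hd hg, prod_cw_good hd hh,
    prod_cw_good hd (GoodW_neg.2 hg), prod_cw_good hd (GoodW_neg.2 hh),
    qexp_neg, qexp_neg, Qfun_eq, Qfun_eq, neg_one_eta, e1, e2, e3, eg, eh]
  have c1 : Complex.I * ((2:ℂ)^(S1.card + S2.card + S3.card + 2 * (Finset.univ \ (S1 ∪ S2 ∪ S3)).card) * eta^(((freq u v 1 2 : ℤ) + freq u v 3 0 + freq u v 0 3 + freq u v 2 1) - ((freq u v 1 0 : ℤ) + freq u v 3 2 + freq u v 0 1 + freq u v 2 3) + 2*(S3 ∩ KA1 u v).card + 2*(S3 ∩ KA2 u v).card - 2*(S3 ∩ KB1 u v).card - 2*(S3 ∩ KB2 u v).card))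
      = (2:ℂ)^(S1.card + S2.card + S3.card + 2 * (Finset.univ \ (S1 ∪ S2 ∪ S3)).card) * eta^((2:ℤ) + (((freq u v 1 2 : ℤ) + freq u v 3 0 + freq u v 0 3 + freq u v 2 1) - ((freq u v 1 0 : ℤ) + freq u v 3 2 + freq u v 0 1 + freq u v 2 3) + 2*(S3 ∩ KA1 u v).card + 2*(S3 ∩ KA2 u v).card - 2*(S3 ∩ KB1 u v).card - 2*(S3 ∩ KB2 u v).card)) := by
    rw [zpow_add₀ eta_ne, ← I_eq_eta]; ring
  have c4 : Complex.I⁻¹ * ((2:ℂ)^(S1.card + S2.card + S3.card + 2 * (Finset.univ \ (S1 ∪ S2 ∪ S3)).card) * eta^(-(((freq u v 1 2 : ℤ) + freq u v 3 0 + freq u v 0 3 + freq u v 2 1) - ((freq u v 1 0 : ℤ) + freq u v 3 2 + freq u v 0 1 + freq u v 2 3) + 2*(S3 ∩ KA1 u v).card + 2*(S3 ∩ KA2 u v).card - 2*(S3 ∩ KB1 u v).card - 2*(S3 ∩ KB2 u v).card)))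
      = (2:ℂ)^(S1.card + S2.card + S3.card + 2 * (Finset.univ \ (S1 ∪ S2 ∪ S3)).card) * eta^((-2:ℤ) + -(((freq u v 1 2 : ℤ) + freq u v 3 0 + freq u v 0 3 + freq u v 2 1) - ((freq u v 1 0 : ℤ) + freq u v 3 2 + freq u v 0 1 + freq u v 2 3) + 2*(S3 ∩ KA1 u v).card + 2*(S3 ∩ KA2 u v).card - 2*(S3 ∩ KB1 u v).card - 2*(S3 ∩ KB2 u v).card)) := by
    rw [zpow_add₀ eta_ne, show eta^(-2:ℤ) = Complex.I⁻¹ from by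
      rw [show (-2:ℤ) = -(2:ℤ) from rfl, zpow_neg, ← I_eq_eta]]
    ring
  rw [c1, c4]
  have hmagR : coefPow n (2*S1.card + S2.card + S3.card) * (1/4) * (2:ℝ)^(S1.card + S2.card + S3.card + 2 * (Finset.univ \ (S1 ∪ S2 ∪ S3)).card)
      = ((2:ℝ) ^ ((((lam1 u v + lam3 u v : ℕ):ℝ)+1)/2))⁻¹ *
        ((2:ℝ) ^ ((((lam2 u v + lam4 u v : ℕ):ℝ)+1)/2))⁻¹ := by
    have hcc := card_compl (S1 := S1) (S2 := S2) (S3 := S3) hd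
    have h1 : (((Finset.univ \ (S1 ∪ S2 ∪ S3)).card : ℕ) : ℝ) + S1.card + S2.card + S3.card
        = (n : ℝ) := by exact_mod_cast congrArg (Nat.cast : ℕ → ℝ) hcc
    have h2' : S2.card + S3.card = (lam1 u v + lam3 u v) + (lam2 u v + lam4 u v) := by omega
    have h2 : ((S2.card : ℕ):ℝ) + S3.card
        = ((lam1 u v + lam3 u v : ℕ):ℝ) + ((lam2 u v + lam4 u v : ℕ):ℝ) := by
      exact_mod_cast congrArg (Nat.cast : ℕ → ℝ) h2'
    unfold coefPow
    rw [← Real.rpow_natCast (2:ℝ) (S1.card + S2.card + S3.card + 2 * (Finset.univ \ (S1 ∪ S2 ∪ S3)).card)]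
    rw [show (1/4:ℝ) = (2:ℝ)^(-2:ℝ) from by
      rw [show (-2:ℝ) = -((2:ℕ):ℝ) by norm_num, Real.rpow_neg (by norm_num : (0:ℝ) ≤ 2),
        Real.rpow_natCast]
      norm_num]
    rw [← Real.rpow_neg (by norm_num : (0:ℝ) ≤ 2), ← Real.rpow_neg (by norm_num : (0:ℝ) ≤ 2)]
    rw [← Real.rpow_add (by norm_num : (0:ℝ) < 2), ← Real.rpow_add (by norm_num : (0:ℝ) < 2),
      ← Real.rpow_add (by norm_num : (0:ℝ) < 2)]
    congr 1
    push_cast at h1 h2 ⊢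
    linarith
  have hmagC : ((coefPow n (2*S1.card + S2.card + S3.card) : ℝ) : ℂ) * (1/4) * (2:ℂ)^(S1.card + S2.card + S3.card + 2 * (Finset.univ \ (S1 ∪ S2 ∪ S3)).card) = ((((2:ℝ) ^ ((((lam1 u v + lam3 u v : ℕ):ℝ)+1)/2)) : ℝ) : ℂ)⁻¹ * ((((2:ℝ) ^ ((((lam2 u v + lam4 u v : ℕ):ℝ)+1)/2)) : ℝ) : ℂ)⁻¹ := by
    rw [← Complex.ofReal_inv, ← Complex.ofReal_inv, ← Complex.ofReal_mul, ← hmagR]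
    push_cast
    ring
  have hphase : eta^((2:ℤ) + (((freq u v 1 2 : ℤ) + freq u v 3 0 + freq u v 0 3 + freq u v 2 1) - ((freq u v 1 0 : ℤ) + freq u v 3 2 + freq u v 0 1 + freq u v 2 3) + 2*(S3 ∩ KA1 u v).card + 2*(S3 ∩ KA2 u v).card - 2*(S3 ∩ KB1 u v).card - 2*(S3 ∩ KB2 u v).card)) + eta^(((freq u v 1 2 : ℤ) + freq u v 3 0 + freq u v 0 1 + freq u v 2 3) - ((freq u v 1 0 : ℤ) + freq u v 3 2 + freq u v 0 3 + freq u v 2 1) + 2*(S3 ∩ KA1 u v).card + 2*(S3 ∩ KB2 u v).card - 2*(S3 ∩ KB1 u v).card - 2*(S3 ∩ KA2 u v).card) + eta^(-(((freq u v 1 2 : ℤ) + freq u v 3 0 + freq u v 0 1 + freq u v 2 3) - ((freq u v 1 0 : ℤ) + freq u v 3 2 + freq u v 0 3 + freq u v 2 1) + 2*(S3 ∩ KA1 u v).card + 2*(S3 ∩ KB2 u v).card - 2*(S3 ∩ KB1 u v).card - 2*(S3 ∩ KA2 u v).card)) + eta^((-2:ℤ) + -(((freq u v 1 2 : ℤ)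 + freq u v 3 0 + freq u v 0 3 + freq u v 2 1) - ((freq u v 1 0 : ℤ) + freq u v 3 2 + freq u v 0 1 + freq u v 2 3) + 2*(S3 ∩ KA1 u v).card + 2*(S3 ∩ KA2 u v).card - 2*(S3 ∩ KB1 u v).card - 2*(S3 ∩ KB2 u v).card))
      = eta^(4*(((S3 ∩ KA1 u v).card + (S3 ∩ KA2 u v).card : ℕ) : ℤ)) *
        ((eta^(1 + ((freq u v 1 2 : ℤ) + (freq u v 3 0 : ℤ) - (freq u v 1 0 : ℤ) - (freq u v 3 2 : ℤ)) - 2*(((S3 ∩ KA1 u v).card + (S3 ∩ KB1 u v).card : ℕ) : ℤ)) + eta^(2*(((S3 ∩ KA1 u v).card + (S3 ∩ KB1 u v).card : ℕ) : ℤ) - 1 - ((freq u v 1 2 : ℤ) + (freq u v 3 0 : ℤ) - (freq u v 1 0 : ℤ) - (freq u v 3 2 : ℤ)))) *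
          (eta^(1 + ((freq u v 0 3 : ℤ) + (freq u v 2 1 : ℤ) - (freq u v 0 1 : ℤ) - (freq u v 2 3 : ℤ)) - 2*(((S3 ∩ KA2 u v).card + (S3 ∩ KB2 u v).card : ℕ) : ℤ)) + eta^(2*(((S3 ∩ KA2 u v).card + (S3 ∩ KB2 u v).card : ℕ) : ℤ) - 1 - ((freq u v 0 3 : ℤ) + (freq u v 2 1 : ℤ) - (freq u v 0 1 : ℤ) - (freq u v 2 3 : ℤ))))) := by
    rw [eta_mul_expand, mul_add, mul_add, mul_add,
      ← zpow_add₀ eta_ne, ← zpow_add₀ eta_ne, ← zpow_add₀ eta_ne, ← zpow_add₀ eta_ne]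
    rw [show eta^((2:ℤ) + (((freq u v 1 2 : ℤ) + freq u v 3 0 + freq u v 0 3 + freq u v 2 1) - ((freq u v 1 0 : ℤ) + freq u v 3 2 + freq u v 0 1 + freq u v 2 3) + 2*(S3 ∩ KA1 u v).card + 2*(S3 ∩ KA2 u v).card - 2*(S3 ∩ KB1 u v).card - 2*(S3 ∩ KB2 u v).card))
        = eta^(4*(((S3 ∩ KA1 u v).card + (S3 ∩ KA2 u v).card : ℕ) : ℤ) + (1 + ((freq u v 1 2 : ℤ) + (freq u v 3 0 : ℤ) - (freq u v 1 0 : ℤ) - (freq u v 3 2 : ℤ)) - 2*(((S3 ∩ KA1 u v).card + (S3 ∩ KB1 u v).card : ℕ) : ℤ) + (1 + ((freq u v 0 3 : ℤ) + (freq u v 2 1 : ℤ) - (freq u v 0 1 : ℤ) - (freq u v 2 3 : ℤ)) - 2*(((S3 ∩ KA2 u v).card + (S3 ∩ KB2 u v).card : ℕ) : ℤ)))) from eta_congr (by omega),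
      show eta^(((freq u v 1 2 : ℤ) + freq u v 3 0 + freq u v 0 1 + freq u v 2 3) - ((freq u v 1 0 : ℤ) + freq u v 3 2 + freq u v 0 3 + freq u v 2 1) + 2*(S3 ∩ KA1 u v).card + 2*(S3 ∩ KB2 u v).card - 2*(S3 ∩ KB1 u v).card - 2*(S3 ∩ KA2 u v).card)
        = eta^(4*(((S3 ∩ KA1 u v).card + (S3 ∩ KA2 u v).card : ℕ) : ℤ) + (1 + ((freq u v 1 2 : ℤ) + (freq u v 3 0 : ℤ) - (freq u v 1 0 : ℤ) - (freq u v 3 2 : ℤ)) - 2*(((S3 ∩ KA1 u v).card + (S3 ∩ KB1 u v).card : ℕ) : ℤ) + (2*(((S3 ∩ KA2 u v).card + (S3 ∩ KB2 u v).card : ℕ) : ℤ) - 1 - ((freq u v 0 3 : ℤ) + (freq u v 2 1 : ℤ) - (freq u v 0 1 : ℤ) - (freq u v 2 3 : ℤ))))) from eta_congr (by omega),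
      show eta^(-(((freq u v 1 2 : ℤ) + freq u v 3 0 + freq u v 0 1 + freq u v 2 3) - ((freq u v 1 0 : ℤ) + freq u v 3 2 + freq u v 0 3 + freq u v 2 1) + 2*(S3 ∩ KA1 u v).card + 2*(S3 ∩ KB2 u v).card - 2*(S3 ∩ KB1 u v).card - 2*(S3 ∩ KA2 u v).card))
        = eta^(4*(((S3 ∩ KA1 u v).card + (S3 ∩ KA2 u v).card : ℕ) : ℤ) + (2*(((S3 ∩ KA1 u v).card + (S3 ∩ KB1 u v).card : ℕ) : ℤ) - 1 - ((freq u v 1 2 : ℤ) + (freq u v 3 0 : ℤ) - (freq u v 1 0 : ℤ) - (freq u v 3 2 : ℤ)) + (1 + ((freq u v 0 3 : ℤ) + (freq u v 2 1 : ℤ) - (freq u v 0 1 : ℤ) - (freq u v 2 3 : ℤ)) - 2*(((S3 ∩ KA2 u v).card + (S3 ∩ KB2 u v).card : ℕ) : ℤ)))) from eta_congr (by omega),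
      show eta^((-2:ℤ) + -(((freq u v 1 2 : ℤ) + freq u v 3 0 + freq u v 0 3 + freq u v 2 1) - ((freq u v 1 0 : ℤ) + freq u v 3 2 + freq u v 0 1 + freq u v 2 3) + 2*(S3 ∩ KA1 u v).card + 2*(S3 ∩ KA2 u v).card - 2*(S3 ∩ KB1 u v).card - 2*(S3 ∩ KB2 u v).card))
        = eta^(4*(((S3 ∩ KA1 u v).card + (S3 ∩ KA2 u v).card : ℕ) : ℤ) + (2*(((S3 ∩ KA1 u v).card + (S3 ∩ KB1 u v).card : ℕ) : ℤ) - 1 - ((freq u v 1 2 : ℤ) + (freq u v 3 0 : ℤ) - (freq u v 1 0 : ℤ) - (freq u v 3 2 : ℤ)) + (2*(((S3 ∩ KA2 u v).card + (S3 ∩ KB2 u v).card : ℕ) : ℤ) - 1 - ((freq u v 0 3 : ℤ) + (freq u v 2 1 : ℤ) - (freq u v 0 1 : ℤ) - (freq u v 2 3 : ℤ))))) from eta_congr (by omega)]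
  linear_combination hmagC * (eta^((2:ℤ) + (((freq u v 1 2 : ℤ) + freq u v 3 0 + freq u v 0 3 + freq u v 2 1) - ((freq u v 1 0 : ℤ) + freq u v 3 2 + freq u v 0 1 + freq u v 2 3) + 2*(S3 ∩ KA1 u v).card + 2*(S3 ∩ KA2 u v).card - 2*(S3 ∩ KB1 u v).card - 2*(S3 ∩ KB2 u v).card)) + eta^(((freq u v 1 2 : ℤ) + freq u v 3 0 + freq u v 0 1 + freq u v 2 3) - ((freq u v 1 0 : ℤ) + freq u v 3 2 + freq u v 0 3 + freq u v 2 1) + 2*(S3 ∩ KA1 u v).card + 2*(S3 ∩ KB2 u v).card - 2*(S3 ∩ KB1 u v).card - 2*(S3 ∩ KA2 u v).card) + eta^(-(((freq u v 1 2 : ℤ) + freq u v 3 0 + freq u v 0 1 + freq u v 2 3) - ((freq u v 1 0 : ℤ) + freq u v 3 2 + freq u v 0 3 + freq u v 2 1) + 2*(S3 ∩ KA1 u v).card + 2*(S3 ∩ KB2 u v).card - 2*(S3 ∩ KB1 u v).card - 2*(S3 ∩ KA2 u v).card))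
      + eta^((-2:ℤ) + -(((freq u v 1 2 : ℤ) + freq u v 3 0 + freq u v 0 3 + freq u v 2 1) - ((freq u v 1 0 : ℤ) + freq u v 3 2 + freq u v 0 1 + freq u v 2 3) + 2*(S3 ∩ KA1 u v).card + 2*(S3 ∩ KA2 u v).card - 2*(S3 ∩ KB1 u v).card - 2*(S3 ∩ KB2 u v).card))) + (((((2:ℝ) ^ ((((lam1 u v + lam3 u v : ℕ):ℝ)+1)/2)) : ℝ) : ℂ)⁻¹ * ((((2:ℝ) ^ ((((lam2 u v + lam4 u v : ℕ):ℝ)+1)/2)) : ℝ) : ℂ)⁻¹) * hphase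

lemma main_neg {n : ℕ} (u v : Fin n → Fin 4) (S1 S2 S3 : Finset (Fin n))
    (h56 : lam5 u v + lam6 u v = 0) (hd : PairwiseDisj S1 S2 S3)
    (hnc : ¬ CondA23 u v S1 S2 S3) : V0101 u v S1 S2 S3 = 0 := by
  have hz : ((V0101 u v S1 S2 S3 : ℝ) : ℂ) = 0 := by
    rw [V_eq u v hd]
    have hg : ¬ GoodW S1 S2 S3 (gI u v) := fun h => hnc ((goodG_iff h56 hd).1 h)
    have hh : ¬ GoodW S1 S2 S3 (hI u v) := fun h => hnc ((goodH_iff h56 hd).1 h)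
    have hg' : ¬ GoodW S1 S2 S3 (fun j => -(gI u v j)) := fun h => hg (GoodW_neg.1 h)
    have hh' : ¬ GoodW S1 S2 S3 (fun j => -(hI u v j)) := fun h => hh (GoodW_neg.1 h)
    rw [prod_cw_zero hd hg, prod_cw_zero hd hh, prod_cw_zero hd hh', prod_cw_zero hd hg']
    ring
  exact_mod_cast hz

end LA7

/-- Lemma A.7: suppose λ₅ + λ₆ = 0 and x = 0101. (i) If (A.23) fails then V(x) = 0.
(ii) If (A.23) holds then V(x) = (−1)^{n(g,1)} Q₁ Q₂ with β₁ = λ₁+λ₃, β₂ = λ₂+λ₄,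
β₁* = f₁₂+f₃₀−f₁₀−f₃₂, β₂* = f₀₃+f₂₁−f₀₁−f₂₃, μ₁ = #(S₃∩Δ⁽¹⁾), μ₂ = #(S₃∩Δ⁽²⁾). -/
theorem lemmaA7 (n : ℕ) (hn : 1 ≤ n) (u v : Fin n → Fin 4)
    (h56 : lam5 u v + lam6 u v = 0)
    (S1 S2 S3 : Finset (Fin n)) (hd : PairwiseDisj S1 S2 S3) :
    (¬ CondA23 u v S1 S2 S3 → V0101 u v S1 S2 S3 = 0) ∧
    (CondA23 u v S1 S2 S3 →
      ((V0101 u v S1 S2 S3 : ℝ) : ℂ) =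
        (-1 : ℂ) ^ (S3 ∩ DeltaG u v 1).card *
          Qfun (lam1 u v + lam3 u v)
            ((freq u v 1 2 : ℤ) + (freq u v 3 0 : ℤ) - (freq u v 1 0 : ℤ) -
              (freq u v 3 2 : ℤ))
            ((S3 ∩ DeltaOne u v).card) *
          Qfun (lam2 u v + lam4 u v)
            ((freq u v 0 3 : ℤ) + (freq u v 2 1 : ℤ) - (freq u v 0 1 : ℤ) -
              (freq u v 2 3 : ℤ))
            ((S3 ∩ DeltaTwo u v).card)) :=
  ⟨LA7.main_neg u v S1 S2 S3 h56 hd, LA7.main_pos u v S1 S2 S3 h56 hd⟩
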